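/- arXiv:2307.08147 — 4 statements merged into one kernel-verified Lean document; each statement's English description precedes it below -/
import Mathlib

section
/- Let H be a complex Hilbert space and let f : ℙ(H) → ℙ(H) be a bijection that preserves transition probabilities, i.e. p(f(L₀), f(L₁)) = p(L₀, L₁) for all L₀, L₁ ∈ ℙ(H). Then there exists a map U : H → H which is either a unitary operator or an antiunitary operator such that f(L) = U(L) (the image subspace) for every line L ∈ ℙ(H). In other words, every transition-probability-preserving bijection of ℙ(H) is induced by a unitary or antiunitary transformation of H (the von Neumann–Wigner theorem). -/
open scoped LinearAlgebra.Projectivization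

/-- The transition probability between two lines (points of the projective space `ℙ(H)`),
computed from arbitrary nonzero representatives: `p(L₀,L₁) = |⟨ψ₀,ψ₁⟩|²` for unit vectors
`ψᵢ ∈ Lᵢ`. -/
noncomputable def transProb {H : Type*} [NormedAddCommGroup H] [InnerProductSpace ℂ H]
    (L₀ L₁ : ℙ ℂ H) : ℝ :=
  ‖(inner ℂ L₀.rep L₁.rep : ℂ)‖ ^ 2 / (‖L₀.rep‖ ^ 2 * ‖L₁.rep‖ ^ 2)

/-- `U : H → H` is a unitary operator: a ℂ-linear bijection preserving the inner product. -/
def IsUnitaryMap {H : Type*} [NormedAddCommGroup H] [InnerProductSpace ℂ H]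
    (U : H → H) : Prop :=
  Function.Bijective U ∧ (∀ x y : H, U (x + y) = U x + U y) ∧
    (∀ (c : ℂ) (x : H), U (c • x) = c • U x) ∧
    ∀ x y : H, (inner ℂ (U x) (U y) : ℂ) = inner ℂ x y

/-- `U : H → H` is an antiunitary operator: a conjugate-linear bijection conjugating the
inner product. -/
def IsAntiunitaryMap {H : Type*} [NormedAddCommGroup H] [InnerProductSpace ℂ H]
    (U : H → H) : Prop :=
  Function.Bijective U ∧ (∀ x y : H, U (x + y) = U x + U y) ∧
    (∀ (c : ℂ) (x : H), U (c • x) = (starRingEnd ℂ) c • U x) ∧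
    ∀ x y : H, (inner ℂ (U x) (U y) : ℂ) = (starRingEnd ℂ) (inner ℂ x y)

open Projectivization

noncomputable section

namespace WignerAux

local notation "⟪" x ", " y "⟫" => @inner ℂ _ _ x y

variable {H : Type*} [NormedAddCommGroup H] [InnerProductSpace ℂ H]

lemma mk_smul (x : H) (hx : x ≠ 0) (c : ℂ) (hc : c ≠ 0) :
    Projectivization.mk ℂ (c • x) (by simp [smul_eq_zero, hc, hx]) =
      Projectivization.mk ℂ x hx := by
  rw [mk_eq_mk_iff]
  exact ⟨Units.mk0 c hc, rfl⟩

lemma transProb_mk (x y : H) (hx : x ≠ 0) (hy : y ≠ 0) :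
    transProb (Projectivization.mk ℂ x hx) (Projectivization.mk ℂ y hy) =
      ‖⟪x, y⟫‖ ^ 2 / (‖x‖ ^ 2 * ‖y‖ ^ 2) := by
  obtain ⟨a, ha⟩ := (mk_eq_mk_iff ℂ _ _ (rep_nonzero _) hx).1
    (mk_rep (Projectivization.mk ℂ x hx))
  obtain ⟨b, hb⟩ := (mk_eq_mk_iff ℂ _ _ (rep_nonzero _) hy).1
    (mk_rep (Projectivization.mk ℂ y hy))
  rw [transProb, ← ha, ← hb, Units.smul_def, Units.smul_def, inner_smul_left,
    inner_smul_right, norm_smul, norm_smul, norm_mul, norm_mul]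
  have ha0 : ‖(a:ℂ)‖ ≠ 0 := norm_ne_zero_iff.2 a.ne_zero
  have hb0 : ‖(b:ℂ)‖ ≠ 0 := norm_ne_zero_iff.2 b.ne_zero
  have hx0 : ‖x‖ ≠ 0 := norm_ne_zero_iff.2 hx
  have hy0 : ‖y‖ ≠ 0 := norm_ne_zero_iff.2 hy
  rw [RCLike.norm_conj]
  field_simp


lemma norm_eq_of_sq (a b : ℝ) (ha : 0 ≤ a) (hb : 0 ≤ b) (h : a ^ 2 = b ^ 2) : a = b := by
  have := congrArg Real.sqrt h
  rwa [Real.sqrt_sq ha, Real.sqrt_sq hb] at this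

lemma key_inner (f : ℙ ℂ H → ℙ ℂ H)
    (hp : ∀ L₀ L₁ : ℙ ℂ H, transProb (f L₀) (f L₁) = transProb L₀ L₁)
    {x x' y y' : H} (hx : x ≠ 0) (hx' : x' ≠ 0) (hy : y ≠ 0) (hy' : y' ≠ 0)
    (h1 : f (Projectivization.mk ℂ x hx) = Projectivization.mk ℂ y hy)
    (h2 : f (Projectivization.mk ℂ x' hx') = Projectivization.mk ℂ y' hy')
    (hn : ‖y‖ = ‖x‖) (hn' : ‖y'‖ = ‖x'‖) :
    ‖⟪y, y'⟫‖ = ‖⟪x, x'⟫‖ := by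
  have h := hp (Projectivization.mk ℂ x hx) (Projectivization.mk ℂ x' hx')
  rw [h1, h2, transProb_mk, transProb_mk, hn, hn'] at h
  have hx0 : (0:ℝ) < ‖x‖ ^ 2 * ‖x'‖ ^ 2 := by
    have := norm_pos_iff.2 hx
    have := norm_pos_iff.2 hx'
    positivity
  field_simp at h
  simpa using h

lemma norm_eq_iff_normSq {a b : ℂ} : ‖a‖ = ‖b‖ ↔ Complex.normSq a = Complex.normSq b := by
  constructor
  · intro h
    rw [← Complex.sq_norm, ← Complex.sq_norm, h]
  · intro h
    apply norm_eq_of_sq _ _ (norm_nonneg _) (norm_nonneg _)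
    rw [Complex.sq_norm, Complex.sq_norm, h]

lemma complex_cases {c d : ℂ} (h1 : ‖d‖ = ‖c‖) (h2 : ‖1 + d‖ = ‖1 + c‖) :
    d = c ∨ d = starRingEnd ℂ c := by
  rw [norm_eq_iff_normSq] at h1 h2
  simp only [Complex.normSq_apply, Complex.add_re, Complex.add_im, Complex.one_re,
    Complex.one_im] at h1 h2
  have hre : d.re = c.re := by nlinarith
  have him : d.im = c.im ∨ d.im = -c.im := by
    have : d.im ^ 2 = c.im ^ 2 := by nlinarith
    exact sq_eq_sq_iff_eq_or_eq_neg.mp this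
  rcases him with him | him
  · exact Or.inl (Complex.ext hre him)
  · exact Or.inr (Complex.ext (by simpa using hre) (by simpa using him))

lemma mix_lemma {A b : ℂ} (h : ‖A + b‖ = ‖A + starRingEnd ℂ b‖) : A.im = 0 ∨ b.im = 0 := by
  rw [norm_eq_iff_normSq] at h
  simp only [Complex.normSq_apply, Complex.add_re, Complex.add_im, Complex.conj_re,
    Complex.conj_im] at h
  have : A.im * b.im = 0 := by nlinarith
  exact mul_eq_zero.mp this

lemma normSq_add_smul (α β : ℂ) (s : ℝ) :
    Complex.normSq (α + s • β) =
      Complex.normSq α + 2 * (α.re * β.re + α.im * β.im) * s + Complex.normSq β * s ^ 2 := by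
  simp only [Complex.normSq_apply, Complex.add_re, Complex.add_im, Complex.real_smul,
    Complex.mul_re, Complex.mul_im, Complex.ofReal_re, Complex.ofReal_im]
  ring

lemma quad_roots_finite (A B C : ℝ) (h : A ≠ 0 ∨ C ≠ 0) :
    {s : ℝ | A + B * s + C * s ^ 2 = 0}.Finite := by
  have hp : (Polynomial.C A + Polynomial.C B * Polynomial.X +
      Polynomial.C C * Polynomial.X ^ 2 : Polynomial ℝ) ≠ 0 := by
    intro h0
    rcases h with h | h
    · apply h
      have := congrArg (fun p => Polynomial.coeff p 0) h0
      simpa using this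
    · apply h
      have := congrArg (fun p => Polynomial.coeff p 2) h0
      simpa [Polynomial.coeff_one] using this
  refine (Polynomial.finite_setOf_isRoot hp).subset ?_
  intro s hs
  simp only [Set.mem_setOf_eq] at hs
  simp [Polynomial.IsRoot, hs]

lemma lin_roots_finite (a b : ℂ) (ha : a ≠ 0) : {s : ℝ | a + s • b = 0}.Finite := by
  have h : a.re ≠ 0 ∨ a.im ≠ 0 := by
    by_contra hc
    push_neg at hc
    exact ha (Complex.ext hc.1 hc.2)
  rcases h with h | h
  · refine (quad_roots_finite a.re b.re 0 (Or.inl h)).subset ?_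
    intro s hs
    simp only [Set.mem_setOf_eq] at hs ⊢
    have := congrArg Complex.re hs
    simp [Complex.real_smul, Complex.mul_re] at this
    linarith
  · refine (quad_roots_finite a.im b.im 0 (Or.inl h)).subset ?_
    intro s hs
    simp only [Set.mem_setOf_eq] at hs ⊢
    have := congrArg Complex.im hs
    simp [Complex.real_smul, Complex.mul_im] at this
    linarith


set_option linter.unusedSectionVars false

variable [CompleteSpace H] {w : Type*} [DecidableEq w]

lemma hb_ne_zero (e : HilbertBasis w ℂ H) (i : w) : e i ≠ 0 := by
  intro h
  have h1 : ‖e i‖ = 1 := e.orthonormal.1 i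
  rw [h, norm_zero] at h1
  exact zero_ne_one h1

lemma hb_norm_one (e : HilbertBasis w ℂ H) (i : w) : ‖e i‖ = 1 := e.orthonormal.1 i

lemma hb_inner (e : HilbertBasis w ℂ H) (i j : w) :
    (⟪e i, e j⟫ : ℂ) = if i = j then 1 else 0 := by
  classical
  exact orthonormal_iff_ite.mp e.orthonormal i j

lemma hb_pair_ne_zero (e : HilbertBasis w ℂ H) {i j : w} (hij : j ≠ i) : e i + e j ≠ 0 := by
  intro h
  have h2 := congrArg (fun z => (⟪e i, z⟫ : ℂ)) h
  simp only [inner_add_right, inner_zero_right, hb_inner, if_pos rfl,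
    if_neg (Ne.symm hij)] at h2
  simp at h2

lemma hb_pair_norm (e : HilbertBasis w ℂ H) {i j : w} (hij : j ≠ i) :
    ‖e i + e j‖ = Real.sqrt 2 := by
  have h := @norm_add_sq ℂ _ _ _ _ (e i) (e j)
  rw [hb_norm_one, hb_norm_one, hb_inner, if_neg (fun hh => hij (Eq.symm hh))] at h
  apply norm_eq_of_sq _ _ (norm_nonneg _) (Real.sqrt_nonneg _)
  rw [Real.sq_sqrt (by norm_num : (0:ℝ) ≤ 2), h]
  norm_num

lemma exists_V (e b : HilbertBasis w ℂ H) :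
    ∃ V : H ≃ₗᵢ[ℂ] H, (∀ (x : H) (i : w), ⟪b i, V x⟫ = ⟪e i, x⟫) ∧ ∀ i, V (e i) = b i := by
  classical
  refine ⟨e.repr.trans b.repr.symm, fun x i => ?_, fun i => ?_⟩
  · rw [← b.repr_apply_apply, ← e.repr_apply_apply]
    simp
  · show b.repr.symm (e.repr (e i)) = b i
    rw [e.repr_self, b.repr_symm_single]

lemma exists_conj (e : HilbertBasis w ℂ H) :
    ∃ C : H → H, (∀ x y : H, C (x + y) = C x + C y) ∧
      (∀ (c : ℂ) (x : H), C (c • x) = (starRingEnd ℂ) c • C x) ∧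
      (∀ x y : H, (⟪C x, C y⟫ : ℂ) = (starRingEnd ℂ) ⟪x, y⟫) ∧
      (∀ i, C (e i) = e i) ∧ (∀ x, C (C x) = x) ∧
      (∀ (x : H) (i : w), (⟪e i, C x⟫ : ℂ) = (starRingEnd ℂ) ⟪e i, x⟫) := by
  classical
  refine ⟨fun x => e.repr.symm (star (e.repr x)), fun x y => ?_, fun c x => ?_, fun x y => ?_,
    fun i => ?_, fun x => ?_, fun x i => ?_⟩
  · dsimp only
    rw [← map_add, ← star_add, ← map_add]
  · dsimp only
    rw [e.repr.map_smul, star_smul, e.repr.symm.map_smul]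
    rfl
  · dsimp only
    rw [LinearIsometryEquiv.inner_map_map, ← e.repr.inner_map_map x y, lp.inner_eq_tsum,
      lp.inner_eq_tsum, starRingEnd_apply, tsum_star]
    congr 1
    funext i
    rw [lp.star_apply, lp.star_apply, RCLike.inner_apply, RCLike.inner_apply,
      starRingEnd_apply, star_mul', star_star, starRingEnd_apply, star_star]
  · dsimp only
    rw [e.repr_self]
    have hst : star (lp.single (E := fun _ : w => ℂ) 2 i (1:ℂ)) = lp.single 2 i (1:ℂ) := by
      apply lp.ext
      funext j
      rw [lp.star_apply]
      rcases eq_or_ne j i with h | h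
      · subst h; rw [lp.single_apply_self]; simp
      · rw [lp.single_apply_ne _ _ _ h]; simp
    rw [hst, e.repr_symm_single]
  · dsimp only
    rw [LinearIsometryEquiv.apply_symm_apply, star_star, LinearIsometryEquiv.symm_apply_apply]
  · dsimp only
    rw [← e.repr_apply_apply, LinearIsometryEquiv.apply_symm_apply, lp.star_apply,
      ← e.repr_apply_apply]
    rfl


lemma ne_zero_of_inner_ne_zero {a x : H} (h : (⟪a, x⟫ : ℂ) ≠ 0) : x ≠ 0 := by
  intro h0
  rw [h0, inner_zero_right] at h
  exact h rfl

lemma exists_norm_rep (L : ℙ ℂ H) (r : ℝ) (hr : 0 < r) :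
    ∃ y : H, ∃ hy : y ≠ 0, ‖y‖ = r ∧ Projectivization.mk ℂ y hy = L := by
  have hrep := L.rep_nonzero
  have hnorm : ‖L.rep‖ ≠ 0 := norm_ne_zero_iff.2 hrep
  set c : ℂ := ((r / ‖L.rep‖ : ℝ) : ℂ) with hc
  have hc0 : c ≠ 0 := by
    simp only [hc, ne_eq, Complex.ofReal_eq_zero, div_eq_zero_iff]
    push_neg
    exact ⟨ne_of_gt hr, hnorm⟩
  refine ⟨c • L.rep, by simp [smul_eq_zero, hc0, hrep], ?_, ?_⟩
  · rw [norm_smul, Complex.norm_real, Real.norm_eq_abs, abs_div, abs_of_pos hr,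
      abs_of_nonneg (norm_nonneg _), div_mul_cancel₀ _ hnorm]
  · rw [mk_smul L.rep L.rep_nonzero c hc0, mk_rep]

lemma ext_coeff (b : HilbertBasis w ℂ H) {x y : H}
    (h : ∀ i, (⟪b i, x⟫ : ℂ) = ⟪b i, y⟫) : x = y := by
  apply b.repr.injective
  apply lp.ext
  funext i
  rw [b.repr_apply_apply, b.repr_apply_apply, h]

lemma ortho_of_image (f : ℙ ℂ H → ℙ ℂ H)
    (hp : ∀ L₀ L₁ : ℙ ℂ H, transProb (f L₀) (f L₁) = transProb L₀ L₁)
    (e : HilbertBasis w ℂ H) (v : w → H) (hvne : ∀ i, v i ≠ 0) (hnorm : ∀ i, ‖v i‖ = 1)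
    (hfv : ∀ i, f (Projectivization.mk ℂ (e i) (hb_ne_zero e i)) =
      Projectivization.mk ℂ (v i) (hvne i)) : Orthonormal ℂ v := by
  rw [orthonormal_iff_ite]
  intro i j
  rcases eq_or_ne i j with hij | hij
  · subst hij
    rw [if_pos rfl, @inner_self_eq_norm_sq_to_K ℂ, hnorm]
    norm_num
  · rw [if_neg hij]
    have h := key_inner f hp (hb_ne_zero e i) (hb_ne_zero e j) (hvne i) (hvne j)
      (hfv i) (hfv j) (by rw [hnorm, hb_norm_one]) (by rw [hnorm, hb_norm_one])
    rw [hb_inner, if_neg hij, norm_zero, norm_eq_zero] at h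
    exact h

lemma total_of_image (f : ℙ ℂ H → ℙ ℂ H) (hf : Function.Surjective f)
    (hp : ∀ L₀ L₁ : ℙ ℂ H, transProb (f L₀) (f L₁) = transProb L₀ L₁)
    (e : HilbertBasis w ℂ H) (v : w → H) (hvne : ∀ i, v i ≠ 0) (hnorm : ∀ i, ‖v i‖ = 1)
    (hfv : ∀ i, f (Projectivization.mk ℂ (e i) (hb_ne_zero e i)) =
      Projectivization.mk ℂ (v i) (hvne i)) :
    (Submodule.span ℂ (Set.range v))ᗮ = ⊥ := by
  rw [Submodule.eq_bot_iff]
  intro z hz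
  by_contra hz0
  obtain ⟨L, hL⟩ := hf (Projectivization.mk ℂ z hz0)
  obtain ⟨x, hx, hxnorm, hxmk⟩ := exists_norm_rep L 1 one_pos
  obtain ⟨z', hz', hznorm, hzmk⟩ := exists_norm_rep (Projectivization.mk ℂ z hz0) 1 one_pos
  have hinner : ∀ i, (⟪v i, z⟫ : ℂ) = 0 := by
    intro i
    exact (Submodule.mem_orthogonal _ z).1 hz (v i)
      (Submodule.subset_span (Set.mem_range_self i))
  have hzz' : ∀ i, (⟪v i, z'⟫ : ℂ) = 0 := by
    intro i
    obtain ⟨a, ha⟩ := (mk_eq_mk_iff ℂ _ _ hz' hz0).1 hzmk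
    rw [← ha, Units.smul_def, inner_smul_right, hinner, mul_zero]
  have hkey : ∀ i, ‖(⟪e i, x⟫ : ℂ)‖ = 0 := by
    intro i
    have h := key_inner f hp hx (hb_ne_zero e i) hz' (hvne i)
      (by rw [hxmk, hL, ← hzmk]) (hfv i)
      (by rw [hxnorm, hznorm]) (by rw [hnorm, hb_norm_one])
    have h2 : (⟪z', v i⟫ : ℂ) = 0 := by rw [← inner_conj_symm, hzz' i, map_zero]
    rw [h2, norm_zero] at h
    rw [← RCLike.norm_conj, inner_conj_symm]
    exact h.symm
  have hx0 : x = 0 := by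
    apply ext_coeff e (y := 0)
    intro i
    rw [inner_zero_right]
    exact norm_eq_zero.mp (hkey i)
  exact hx hx0


lemma exists_good_basis (f : ℙ ℂ H → ℙ ℂ H) (hf : Function.Surjective f)
    (hp : ∀ L₀ L₁ : ℙ ℂ H, transProb (f L₀) (f L₁) = transProb L₀ L₁)
    (e : HilbertBasis w ℂ H) (i₀ : w) :
    ∃ b : HilbertBasis w ℂ H,
      (∀ i, f (Projectivization.mk ℂ (e i) (hb_ne_zero e i)) =
         Projectivization.mk ℂ (b i) (hb_ne_zero b i)) ∧
      (∀ i, (hi : i ≠ i₀) →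
         f (Projectivization.mk ℂ (e i₀ + e i) (hb_pair_ne_zero e hi)) =
           Projectivization.mk ℂ (b i₀ + b i) (hb_pair_ne_zero b hi)) := by
  -- step 1: unit representatives of the images of basis lines
  choose u' hu'ne hu'norm hu'mk using fun i =>
    exists_norm_rep (f (Projectivization.mk ℂ (e i) (hb_ne_zero e i))) 1 one_pos
  have hfu' : ∀ i, f (Projectivization.mk ℂ (e i) (hb_ne_zero e i)) =
      Projectivization.mk ℂ (u' i) (hu'ne i) := fun i => (hu'mk i).symm
  have hortho' : Orthonormal ℂ u' := ortho_of_image f hp e u' hu'ne hu'norm hfu'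
  have htotal' := total_of_image f hf hp e u' hu'ne hu'norm hfu'
  let b' : HilbertBasis w ℂ H := HilbertBasis.mkOfOrthogonalEqBot hortho' htotal'
  have hb' : ∀ i, b' i = u' i := fun i => by
    rw [show ⇑b' = u' from HilbertBasis.coe_mkOfOrthogonalEqBot hortho' htotal']
  -- step 2: phase adjustment
  have claim : ∀ i, ∀ hi : i ≠ i₀, ∃ c : ℂ, ‖c‖ = 1 ∧
      ∃ hne : u' i₀ + c • u' i ≠ 0,
      f (Projectivization.mk ℂ (e i₀ + e i) (hb_pair_ne_zero e hi))
        = Projectivization.mk ℂ (u' i₀ + c • u' i) hne := by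
    intro i hi
    obtain ⟨y, hy, hynorm, hymk⟩ := exists_norm_rep
      (f (Projectivization.mk ℂ (e i₀ + e i) (hb_pair_ne_zero e hi))) (Real.sqrt 2)
      (Real.sqrt_pos.2 (by norm_num))
    have hcoef : ∀ j, ‖(⟪u' j, y⟫ : ℂ)‖ = ‖(⟪e j, e i₀ + e i⟫ : ℂ)‖ := by
      intro j
      exact key_inner f hp (hb_ne_zero e j) (hb_pair_ne_zero e hi) (hu'ne j) hy
        (hfu' j) hymk.symm (by rw [hu'norm, hb_norm_one]) (by rw [hynorm, hb_pair_norm e hi])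
    have hcoefval : ∀ j, ‖(⟪u' j, y⟫ : ℂ)‖ =
        ‖(if j = i₀ then (1:ℂ) else 0) + (if j = i then (1:ℂ) else 0)‖ := by
      intro j
      rw [hcoef, inner_add_right, hb_inner, hb_inner]
    have hα : ‖(⟪u' i₀, y⟫ : ℂ)‖ = 1 := by
      have := hcoefval i₀
      rwa [if_pos rfl, if_neg (Ne.symm hi), add_zero, norm_one] at this
    have hβ : ‖(⟪u' i, y⟫ : ℂ)‖ = 1 := by
      have := hcoefval i
      rwa [if_neg hi, if_pos rfl, zero_add, norm_one] at this
    have hother : ∀ j, j ≠ i₀ → j ≠ i → (⟪u' j, y⟫ : ℂ) = 0 := by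
      intro j hj1 hj2
      have := hcoefval j
      rw [if_neg hj1, if_neg hj2, add_zero, norm_zero, norm_eq_zero] at this
      exact this
    set α : ℂ := ⟪u' i₀, y⟫ with hαdef
    have hα0 : α ≠ 0 := by
      intro h0
      rw [h0, norm_zero] at hα
      exact zero_ne_one hα
    set c : ℂ := α⁻¹ * ⟪u' i, y⟫ with hcdef
    have hc1 : ‖c‖ = 1 := by
      rw [hcdef, norm_mul, norm_inv, hα, hβ, inv_one, one_mul]
    have hc0 : c ≠ 0 := by
      intro h0
      rw [h0, norm_zero] at hc1
      exact zero_ne_one hc1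
    have hne : u' i₀ + c • u' i ≠ 0 := by
      apply ne_zero_of_inner_ne_zero (a := u' i₀)
      rw [inner_add_right, inner_smul_right]
      rw [orthonormal_iff_ite.mp hortho' i₀ i₀, orthonormal_iff_ite.mp hortho' i₀ i,
        if_pos rfl, if_neg (Ne.symm hi), mul_zero, add_zero]
      exact one_ne_zero
    refine ⟨c, hc1, hne, ?_⟩
    have hyeq : α⁻¹ • y = u' i₀ + c • u' i := by
      apply ext_coeff b'
      intro j
      rw [hb' j, inner_smul_right, inner_add_right, inner_smul_right,
        orthonormal_iff_ite.mp hortho' j i₀, orthonormal_iff_ite.mp hortho' j i]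
      rcases eq_or_ne j i₀ with hj | hj
      · subst hj
        rw [if_pos rfl, if_neg (Ne.symm hi), ← hαdef, inv_mul_cancel₀ hα0, mul_zero, add_zero]
      · rcases eq_or_ne j i with hj2 | hj2
        · subst hj2
          rw [if_neg hj, if_pos rfl, mul_one, hcdef, zero_add]
        · rw [if_neg hj, if_neg hj2, hother j hj hj2, mul_zero, mul_zero, add_zero]
    rw [← hymk]
    refine (mk_eq_mk_iff ℂ _ _ hy hne).2 ⟨Units.mk0 α hα0, ?_⟩
    rw [Units.smul_def, Units.val_mk0, ← hyeq, smul_smul, mul_inv_cancel₀ hα0, one_smul]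
  choose cc hcc1 hccne hccmk using claim
  -- step 3: the adjusted family
  set u : w → H := fun i => if h : i = i₀ then u' i else cc i h • u' i with hudef
  have hu_eq : ∀ i (h : i ≠ i₀), u i = cc i h • u' i := by
    intro i h
    simp only [hudef, dif_neg h]
  have hu_i₀ : u i₀ = u' i₀ := by simp only [hudef, dif_pos rfl]
  have hune : ∀ i, u i ≠ 0 := by
    intro i
    rcases eq_or_ne i i₀ with h | h
    · rw [h, hu_i₀]; exact hu'ne i₀
    · rw [hu_eq i h]
      have : cc i h ≠ 0 := by
        intro h0
        have := hcc1 i h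
        rw [h0, norm_zero] at this
        exact zero_ne_one this
      simp [smul_eq_zero, this, hu'ne i]
  have hunorm : ∀ i, ‖u i‖ = 1 := by
    intro i
    rcases eq_or_ne i i₀ with h | h
    · rw [h, hu_i₀, hu'norm]
    · rw [hu_eq i h, norm_smul, hcc1 i h, one_mul, hu'norm]
  have hfu : ∀ i, f (Projectivization.mk ℂ (e i) (hb_ne_zero e i)) =
      Projectivization.mk ℂ (u i) (hune i) := by
    intro i
    rcases eq_or_ne i i₀ with h | h
    · subst h
      rw [hfu' i]
      congr 1
      rw [hu_i₀]
    · rw [hfu' i]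
      have hc0 : cc i h ≠ 0 := by
        intro h0
        have := hcc1 i h
        rw [h0, norm_zero] at this
        exact zero_ne_one this
      have := mk_smul (u' i) (hu'ne i) (cc i h) hc0
      rw [← this]
      congr 1
      rw [hu_eq i h]
  have hortho : Orthonormal ℂ u := ortho_of_image f hp e u hune hunorm hfu
  have htotal := total_of_image f hf hp e u hune hunorm hfu
  refine ⟨HilbertBasis.mkOfOrthogonalEqBot hortho htotal, ?_, ?_⟩
  · intro i
    rw [hfu i]
    congr 1
    rw [show ⇑(HilbertBasis.mkOfOrthogonalEqBot hortho htotal) = u from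
      HilbertBasis.coe_mkOfOrthogonalEqBot hortho htotal]
  · intro i hi
    rw [hccmk i hi]
    have hb : ∀ j, (HilbertBasis.mkOfOrthogonalEqBot hortho htotal) j = u j := fun j => by
      rw [show ⇑(HilbertBasis.mkOfOrthogonalEqBot hortho htotal) = u from
        HilbertBasis.coe_mkOfOrthogonalEqBot hortho htotal]
    congr 1
    rw [hb i₀, hb i, hu_i₀, hu_eq i hi]


lemma expand_lemma (f : ℙ ℂ H → ℙ ℂ H)
    (hp : ∀ L₀ L₁ : ℙ ℂ H, transProb (f L₀) (f L₁) = transProb L₀ L₁)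
    (e b : HilbertBasis w ℂ H) (i₀ : w)
    (hfb : ∀ i, f (Projectivization.mk ℂ (e i) (hb_ne_zero e i)) =
      Projectivization.mk ℂ (b i) (hb_ne_zero b i))
    (hfpair : ∀ i, ∀ hi : i ≠ i₀,
      f (Projectivization.mk ℂ (e i₀ + e i) (hb_pair_ne_zero e hi)) =
        Projectivization.mk ℂ (b i₀ + b i) (hb_pair_ne_zero b hi))
    (x : H) (hx0 : x ≠ 0) (hx1 : (⟪e i₀, x⟫ : ℂ) = 1) :
    ∃ y : H, ∃ hy : y ≠ 0,
      f (Projectivization.mk ℂ x hx0) = Projectivization.mk ℂ y hy ∧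
      ‖y‖ = ‖x‖ ∧ (⟪b i₀, y⟫ : ℂ) = 1 ∧
      (∀ j, ‖(⟪b j, y⟫ : ℂ)‖ = ‖(⟪e j, x⟫ : ℂ)‖) ∧
      (∀ j, j ≠ i₀ →
        (⟪b j, y⟫ : ℂ) = ⟪e j, x⟫ ∨ (⟪b j, y⟫ : ℂ) = (starRingEnd ℂ) ⟪e j, x⟫) := by
  obtain ⟨y₀, hy₀, hy₀norm, hy₀mk⟩ :=
    exists_norm_rep (f (Projectivization.mk ℂ x hx0)) ‖x‖ (norm_pos_iff.2 hx0)
  have hcoef₀ : ∀ j, ‖(⟪b j, y₀⟫ : ℂ)‖ = ‖(⟪e j, x⟫ : ℂ)‖ := fun j =>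
    key_inner f hp (hb_ne_zero e j) hx0 (hb_ne_zero b j) hy₀ (hfb j) hy₀mk.symm
      (by rw [hb_norm_one, hb_norm_one]) hy₀norm
  set α : ℂ := ⟪b i₀, y₀⟫ with hαdef
  have hα1 : ‖α‖ = 1 := by rw [hαdef, hcoef₀ i₀, hx1, norm_one]
  have hα0 : α ≠ 0 := by
    intro h0
    rw [h0, norm_zero] at hα1
    exact zero_ne_one hα1
  have hyne : α⁻¹ • y₀ ≠ 0 := smul_ne_zero (inv_ne_zero hα0) hy₀
  refine ⟨α⁻¹ • y₀, hyne, ?_, ?_, ?_, ?_, ?_⟩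
  · rw [← hy₀mk, mk_smul y₀ hy₀ α⁻¹ (inv_ne_zero hα0)]
  · rw [norm_smul, norm_inv, hα1, inv_one, one_mul, hy₀norm]
  · rw [inner_smul_right, ← hαdef, inv_mul_cancel₀ hα0]
  · intro j
    rw [inner_smul_right, norm_mul, norm_inv, hα1, inv_one, one_mul, hcoef₀ j]
  · intro j hj
    have hd : ‖(⟪b j, α⁻¹ • y₀⟫ : ℂ)‖ = ‖(⟪e j, x⟫ : ℂ)‖ := by
      rw [inner_smul_right, norm_mul, norm_inv, hα1, inv_one, one_mul, hcoef₀ j]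
    have hcomp : ‖(1 : ℂ) + ⟪b j, α⁻¹ • y₀⟫‖ = ‖(1 : ℂ) + ⟪e j, x⟫‖ := by
      have h := key_inner f hp (hb_pair_ne_zero e hj) hx0 (hb_pair_ne_zero b hj) hyne
        (hfpair j hj) (by rw [← hy₀mk, mk_smul y₀ hy₀ α⁻¹ (inv_ne_zero hα0)])
        (by rw [hb_pair_norm b hj, hb_pair_norm e hj])
        (by rw [norm_smul, norm_inv, hα1, inv_one, one_mul, hy₀norm])
      rw [inner_add_left, inner_add_left] at h
      rw [inner_smul_right, ← hαdef, inv_mul_cancel₀ hα0, hx1] at h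
      simpa [inner_smul_right] using h
    exact complex_cases hd hcomp

lemma real_case (f : ℙ ℂ H → ℙ ℂ H)
    (hp : ∀ L₀ L₁ : ℙ ℂ H, transProb (f L₀) (f L₁) = transProb L₀ L₁)
    (e b : HilbertBasis w ℂ H) (i₀ : w)
    (hfb : ∀ i, f (Projectivization.mk ℂ (e i) (hb_ne_zero e i)) =
      Projectivization.mk ℂ (b i) (hb_ne_zero b i))
    (hfpair : ∀ i, ∀ hi : i ≠ i₀,
      f (Projectivization.mk ℂ (e i₀ + e i) (hb_pair_ne_zero e hi)) =
        Projectivization.mk ℂ (b i₀ + b i) (hb_pair_ne_zero b hi))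
    (x : H) (hx0 : x ≠ 0) (hx1 : (⟪e i₀, x⟫ : ℂ) = 1)
    (hreal : ∀ j, ((⟪e j, x⟫ : ℂ)).im = 0) :
    ∃ y : H, ∃ hy : y ≠ 0,
      f (Projectivization.mk ℂ x hx0) = Projectivization.mk ℂ y hy ∧
      ‖y‖ = ‖x‖ ∧ ∀ j, (⟪b j, y⟫ : ℂ) = ⟪e j, x⟫ := by
  obtain ⟨y, hy, hmk, hnorm, hi₀, hcn, hopt⟩ :=
    expand_lemma f hp e b i₀ hfb hfpair x hx0 hx1
  refine ⟨y, hy, hmk, hnorm, fun j => ?_⟩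
  rcases eq_or_ne j i₀ with hj | hj
  · rw [hj, hi₀, hx1]
  · rcases hopt j hj with h | h
    · exact h
    · rw [h, Complex.conj_eq_iff_im.2 (hreal j)]

lemma dichotomy (f : ℙ ℂ H → ℙ ℂ H)
    (hp : ∀ L₀ L₁ : ℙ ℂ H, transProb (f L₀) (f L₁) = transProb L₀ L₁)
    (e b : HilbertBasis w ℂ H) (i₀ : w)
    (hfb : ∀ i, f (Projectivization.mk ℂ (e i) (hb_ne_zero e i)) =
      Projectivization.mk ℂ (b i) (hb_ne_zero b i))
    (hfpair : ∀ i, ∀ hi : i ≠ i₀,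
      f (Projectivization.mk ℂ (e i₀ + e i) (hb_pair_ne_zero e hi)) =
        Projectivization.mk ℂ (b i₀ + b i) (hb_pair_ne_zero b hi))
    (x : H) (hx0 : x ≠ 0) (hx1 : (⟪e i₀, x⟫ : ℂ) = 1) :
    ∃ y : H, ∃ hy : y ≠ 0,
      f (Projectivization.mk ℂ x hx0) = Projectivization.mk ℂ y hy ∧ ‖y‖ = ‖x‖ ∧
      ((∀ j, (⟪b j, y⟫ : ℂ) = ⟪e j, x⟫) ∨
       (∀ j, (⟪b j, y⟫ : ℂ) = (starRingEnd ℂ) ⟪e j, x⟫)) := by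
  obtain ⟨y, hy, hmk, hnorm, hi₀, hcn, hopt⟩ :=
    expand_lemma f hp e b i₀ hfb hfpair x hx0 hx1
  by_cases hall : ∀ j, (⟪b j, y⟫ : ℂ) = ⟪e j, x⟫
  · exact ⟨y, hy, hmk, hnorm, Or.inl hall⟩
  push_neg at hall
  obtain ⟨j, hj⟩ := hall
  have hjne : j ≠ i₀ := by
    intro h
    exact hj (by rw [h, hi₀, hx1])
  have hdj : (⟪b j, y⟫ : ℂ) = (starRingEnd ℂ) ⟪e j, x⟫ := (hopt j hjne).resolve_left hj
  have hjim : ((⟪e j, x⟫ : ℂ)).im ≠ 0 := by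
    intro h
    exact hj (by rw [hdj, Complex.conj_eq_iff_im.2 h])
  refine ⟨y, hy, hmk, hnorm, Or.inr fun k => ?_⟩
  rcases eq_or_ne k i₀ with hk | hk
  · rw [hk, hi₀, hx1]
    simp
  rcases hopt k hk with hdk | hdk
  · by_cases hkim : ((⟪e k, x⟫ : ℂ)).im = 0
    · rw [hdk, Complex.conj_eq_iff_im.2 hkim]
    exfalso
    have hkj : k ≠ j := by
      intro h
      subst h
      exact hj hdk
    -- the triple vector
    set z : H := e i₀ + e j + e k with hzdef
    have hz1 : (⟪e i₀, z⟫ : ℂ) = 1 := by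
      rw [hzdef, inner_add_right, inner_add_right, hb_inner, hb_inner, hb_inner,
        if_pos rfl, if_neg (Ne.symm hjne), if_neg (Ne.symm hk)]
      norm_num
    have hz0 : z ≠ 0 := ne_zero_of_inner_ne_zero (a := e i₀) (by rw [hz1]; exact one_ne_zero)
    have hzreal : ∀ m, ((⟪e m, z⟫ : ℂ)).im = 0 := by
      intro m
      rw [hzdef, inner_add_right, inner_add_right, hb_inner, hb_inner, hb_inner]
      split_ifs <;> simp
    obtain ⟨yz, hyz0, hyzmk, hyznorm, hyzc⟩ :=
      real_case f hp e b i₀ hfb hfpair z hz0 hz1 hzreal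
    have hyzeq : yz = b i₀ + b j + b k := by
      apply ext_coeff b
      intro m
      rw [hyzc m, hzdef, inner_add_right, inner_add_right, inner_add_right, inner_add_right,
        hb_inner, hb_inner, hb_inner, hb_inner, hb_inner, hb_inner]
    have hcomp := key_inner f hp hz0 hx0 hyz0 hy hyzmk hmk hyznorm hnorm
    rw [hyzeq, inner_add_left, inner_add_left, hi₀, hdj, hdk] at hcomp
    rw [hzdef, inner_add_left, inner_add_left, hx1] at hcomp
    -- hcomp : ‖1 + conj cj + ck‖ = ‖1 + cj + ck‖
    have := mix_lemma (A := 1 + (⟪e k, x⟫ : ℂ)) (b := (⟪e j, x⟫ : ℂ)) ?_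
    · rcases this with h | h
      · rw [Complex.add_im, Complex.one_im, zero_add] at h
        exact hkim h
      · exact hjim h
    · rw [show ((1 : ℂ) + ⟪e k, x⟫) + ⟪e j, x⟫ = 1 + ⟪e j, x⟫ + ⟪e k, x⟫ by ring,
        show ((1 : ℂ) + ⟪e k, x⟫) + (starRingEnd ℂ) ⟪e j, x⟫ =
          1 + (starRingEnd ℂ) ⟪e j, x⟫ + ⟪e k, x⟫ by ring]
      exact hcomp.symm
  · exact hdk


lemma inner_self_norm (x : H) : ‖(⟪x, x⟫ : ℂ)‖ = ‖x‖ * ‖x‖ := by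
  rw [@inner_self_eq_norm_sq_to_K ℂ, norm_pow, RCLike.norm_ofReal,
    abs_of_nonneg (norm_nonneg _), sq]

lemma quad_coeff_ne (x x' : H) (hx0 : x ≠ 0) (hx'n : ‖x'‖ = ‖x‖)
    (hx' : ∀ a : ℂ, x' ≠ a • x) :
    Complex.normSq (⟪x, x⟫ : ℂ) - Complex.normSq (⟪x, x'⟫ : ℂ) ≠ 0 := by
  intro h
  have hx'0 : x' ≠ 0 := by
    intro h0
    exact hx' 0 (by rw [h0, zero_smul])
  have hnormeq : ‖(⟪x, x'⟫ : ℂ)‖ = ‖x‖ * ‖x'‖ := by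
    have h' : ‖(⟪x, x⟫ : ℂ)‖ = ‖(⟪x, x'⟫ : ℂ)‖ :=
      norm_eq_iff_normSq.2 (by linarith)
    rw [← h', inner_self_norm, hx'n]
  obtain ⟨r, _, hr⟩ := (norm_inner_eq_norm_iff hx0 hx'0).1 hnormeq
  exact hx' r hr

lemma test_vector (g x x' z z' : H) (hx0 : x ≠ 0) (hz0 : z ≠ 0)
    (hx'n : ‖x'‖ = ‖x‖) (hz'n : ‖z'‖ = ‖z‖)
    (hx' : ∀ a : ℂ, x' ≠ a • x) (hz' : ∀ a : ℂ, z' ≠ a • z)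
    (he : (⟪g, x⟫ : ℂ) ≠ 0) :
    ∃ t : H, (⟪g, t⟫ : ℂ) ≠ 0 ∧ ‖(⟪t, x⟫ : ℂ)‖ ≠ ‖(⟪t, x'⟫ : ℂ)‖ ∧
      ‖(⟪t, z⟫ : ℂ)‖ ≠ ‖(⟪t, z'⟫ : ℂ)‖ := by
  classical
  set S1 : Set ℝ := {s : ℝ | (⟪g, x⟫ : ℂ) + s • (⟪g, z⟫ : ℂ) = 0} with hS1def
  have hS1 : S1.Finite := lin_roots_finite _ _ he
  set A1 : ℝ := Complex.normSq (⟪x, x⟫ : ℂ) - Complex.normSq (⟪x, x'⟫ : ℂ) with hA1def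
  have hA1 : A1 ≠ 0 := quad_coeff_ne x x' hx0 hx'n hx'
  set B1 : ℝ := 2 * ((⟪x, x⟫ : ℂ).re * (⟪z, x⟫ : ℂ).re + (⟪x, x⟫ : ℂ).im * (⟪z, x⟫ : ℂ).im) -
    2 * ((⟪x, x'⟫ : ℂ).re * (⟪z, x'⟫ : ℂ).re + (⟪x, x'⟫ : ℂ).im * (⟪z, x'⟫ : ℂ).im) with hB1def
  set C1 : ℝ := Complex.normSq (⟪z, x⟫ : ℂ) - Complex.normSq (⟪z, x'⟫ : ℂ) with hC1def
  set S2 : Set ℝ := {s : ℝ | Complex.normSq ((⟪x, x⟫ : ℂ) + s • (⟪z, x⟫ : ℂ)) =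
    Complex.normSq ((⟪x, x'⟫ : ℂ) + s • (⟪z, x'⟫ : ℂ))} with hS2def
  have hS2 : S2.Finite := by
    refine (quad_roots_finite A1 B1 C1 (Or.inl hA1)).subset ?_
    intro s hs
    rw [hS2def, Set.mem_setOf_eq, normSq_add_smul, normSq_add_smul] at hs
    rw [Set.mem_setOf_eq, hA1def, hB1def, hC1def]
    linarith
  set C3 : ℝ := Complex.normSq (⟪z, z⟫ : ℂ) - Complex.normSq (⟪z, z'⟫ : ℂ) with hC3def
  have hC3 : C3 ≠ 0 := quad_coeff_ne z z' hz0 hz'n hz'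
  set A3 : ℝ := Complex.normSq (⟪x, z⟫ : ℂ) - Complex.normSq (⟪x, z'⟫ : ℂ) with hA3def
  set B3 : ℝ := 2 * ((⟪x, z⟫ : ℂ).re * (⟪z, z⟫ : ℂ).re + (⟪x, z⟫ : ℂ).im * (⟪z, z⟫ : ℂ).im) -
    2 * ((⟪x, z'⟫ : ℂ).re * (⟪z, z'⟫ : ℂ).re + (⟪x, z'⟫ : ℂ).im * (⟪z, z'⟫ : ℂ).im) with hB3def
  set S3 : Set ℝ := {s : ℝ | Complex.normSq ((⟪x, z⟫ : ℂ) + s • (⟪z, z⟫ : ℂ)) =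
    Complex.normSq ((⟪x, z'⟫ : ℂ) + s • (⟪z, z'⟫ : ℂ))} with hS3def
  have hS3 : S3.Finite := by
    refine (quad_roots_finite A3 B3 C3 (Or.inr hC3)).subset ?_
    intro s hs
    rw [hS3def, Set.mem_setOf_eq, normSq_add_smul, normSq_add_smul] at hs
    rw [Set.mem_setOf_eq, hA3def, hB3def, hC3def]
    linarith
  obtain ⟨s, hs⟩ := ((hS1.union hS2).union hS3).infinite_compl.nonempty
  simp only [Set.mem_compl_iff, Set.mem_union, not_or] at hs
  obtain ⟨⟨hs1, hs2⟩, hs3⟩ := hs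
  refine ⟨x + (s : ℂ) • z, ?_, ?_, ?_⟩
  · rw [inner_add_right, inner_smul_right]
    intro h0
    apply hs1
    rw [hS1def, Set.mem_setOf_eq, Complex.real_smul]
    exact h0
  · intro h
    apply hs2
    rw [hS2def, Set.mem_setOf_eq]
    rw [norm_eq_iff_normSq] at h
    rw [inner_add_left, inner_add_left, inner_smul_left, Complex.conj_ofReal,
      inner_smul_left, Complex.conj_ofReal] at h
    rw [Complex.real_smul, Complex.real_smul]
    exact h
  · intro h
    apply hs3
    rw [hS3def, Set.mem_setOf_eq]
    rw [norm_eq_iff_normSq] at h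
    rw [inner_add_left, inner_add_left, inner_smul_left, Complex.conj_ofReal,
      inner_smul_left, Complex.conj_ofReal] at h
    rw [Complex.real_smul, Complex.real_smul]
    exact h

theorem main
    {H : Type*} [NormedAddCommGroup H] [InnerProductSpace ℂ H] [CompleteSpace H]
    (f : ℙ ℂ H → ℙ ℂ H) (hf : Function.Bijective f)
    (hp : ∀ L₀ L₁ : ℙ ℂ H, transProb (f L₀) (f L₁) = transProb L₀ L₁) :
    ∃ U : H → H, (IsUnitaryMap U ∨ IsAntiunitaryMap U) ∧
      ∀ L : ℙ ℂ H, ((f L).submodule : Set H) = U '' ((L.submodule : Submodule ℂ H) : Set H) := by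
  classical
  rcases subsingleton_or_nontrivial H with hH | hH
  · have hempty : IsEmpty (ℙ ℂ H) := ⟨fun L => L.rep_nonzero (Subsingleton.elim _ _)⟩
    exact ⟨id, Or.inl ⟨Function.bijective_id, fun x y => rfl, fun c x => rfl, fun x y => rfl⟩,
      fun L => hempty.elim L⟩
  obtain ⟨w, e0, he0⟩ := exists_hilbertBasis ℂ H
  have hwne : Nonempty w := by
    by_contra hw
    rw [not_nonempty_iff] at hw
    have hsub : Subsingleton (lp (fun _ : w => ℂ) 2) :=
      ⟨fun a c => lp.ext (funext fun i => isEmptyElim i)⟩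
    have : Subsingleton H := ⟨fun a c => e0.repr.injective (Subsingleton.elim _ _)⟩
    exact (not_subsingleton H) this
  obtain ⟨i₀⟩ := hwne
  obtain ⟨b, hfb, hfpair⟩ := exists_good_basis f hf.2 hp e0 i₀
  obtain ⟨V, hVcoef, hVbasis⟩ := exists_V e0 b
  obtain ⟨C, hCadd, hCsmul, hCinner, hCbasis, hCC, hCcoef⟩ := exists_conj e0
  have hC0 : C 0 = 0 := by
    have := hCsmul 0 0
    simpa using this
  have hCnorm : ∀ v : H, ‖C v‖ = ‖v‖ := by
    intro v
    have h1 : (⟪C v, C v⟫ : ℂ) = (starRingEnd ℂ) ⟪v, v⟫ := hCinner v v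
    have h2 := congrArg Complex.re h1
    rw [Complex.conj_re] at h2
    apply norm_eq_of_sq _ _ (norm_nonneg _) (norm_nonneg _)
    rw [← @inner_self_eq_norm_sq ℂ, ← @inner_self_eq_norm_sq ℂ]
    exact h2
  have hCne : ∀ v : H, v ≠ 0 → C v ≠ 0 := by
    intro v hv h0
    apply hv
    rw [← hCC v, h0, hC0]
  have hCbij : Function.Bijective C :=
    Function.Involutive.bijective (fun v => hCC v)
  have hVne : ∀ v : H, v ≠ 0 → V v ≠ 0 := by
    intro v hv h0
    exact hv (V.injective (by rw [h0, map_zero]))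
  have hVCne : ∀ v : H, v ≠ 0 → V (C v) ≠ 0 := fun v hv => hVne _ (hCne v hv)
  -- every line with nonvanishing i₀-coordinate maps to [V x] or [V (C x)]
  have two_cand : ∀ (x : H) (hx0 : x ≠ 0), (⟪e0 i₀, x⟫ : ℂ) ≠ 0 →
      f (Projectivization.mk ℂ x hx0) = Projectivization.mk ℂ (V x) (hVne x hx0) ∨
      f (Projectivization.mk ℂ x hx0) = Projectivization.mk ℂ (V (C x)) (hVCne x hx0) := by
    intro x hx0 h0
    set lam : ℂ := (⟪e0 i₀, x⟫ : ℂ)⁻¹ with hlamdef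
    have hlam0 : lam ≠ 0 := inv_ne_zero h0
    have hz0 : lam • x ≠ 0 := smul_ne_zero hlam0 hx0
    have hz1 : (⟪e0 i₀, lam • x⟫ : ℂ) = 1 := by
      rw [inner_smul_right]
      exact inv_mul_cancel₀ h0
    obtain ⟨y, hy, hmk, hnorm, hor⟩ := dichotomy f hp e0 b i₀ hfb hfpair (lam • x) hz0 hz1
    have hmkx : f (Projectivization.mk ℂ x hx0) = Projectivization.mk ℂ y hy := by
      rw [← mk_smul x hx0 lam hlam0]
      exact hmk
    rcases hor with hcoefs | hcoefs
    · left
      rw [hmkx]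
      have hyV : y = lam • V x := by
        apply ext_coeff b
        intro j
        rw [hcoefs j, inner_smul_right, inner_smul_right, hVcoef]
      refine (mk_eq_mk_iff ℂ _ _ hy (hVne x hx0)).2 ⟨Units.mk0 lam hlam0, ?_⟩
      rw [Units.smul_def, Units.val_mk0]
      exact hyV.symm
    · right
      rw [hmkx]
      have hlamc0 : (starRingEnd ℂ) lam ≠ 0 := by
        intro hcc
        apply hlam0
        have := congrArg (starRingEnd ℂ) hcc
        simpa using this
      have hyV : y = (starRingEnd ℂ) lam • V (C x) := by
        apply ext_coeff b
        intro j
        rw [hcoefs j, inner_smul_right, inner_smul_right, map_mul, hVcoef, hCcoef]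
      refine (mk_eq_mk_iff ℂ _ _ hy (hVCne x hx0)).2 ⟨Units.mk0 _ hlamc0, ?_⟩
      rw [Units.smul_def, Units.val_mk0]
      exact hyV.symm
  -- rigidity: a strictly unitary point and a strictly antiunitary point cannot coexist
  have pair_rig : ∀ (x z : H) (hx0 : x ≠ 0) (hz0 : z ≠ 0),
      (⟪e0 i₀, x⟫ : ℂ) ≠ 0 → (⟪e0 i₀, z⟫ : ℂ) ≠ 0 →
      f (Projectivization.mk ℂ x hx0) = Projectivization.mk ℂ (V x) (hVne x hx0) →
      f (Projectivization.mk ℂ z hz0) = Projectivization.mk ℂ (V (C z)) (hVCne z hz0) →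
      (∃ a : ℂ, C x = a • x) ∨ (∃ a : ℂ, C z = a • z) := by
    intro x z hx0 hz0 h0x h0z hfx hfz
    by_contra hcon
    push_neg at hcon
    obtain ⟨hconx, hconz⟩ := hcon
    obtain ⟨t, ht0, ht2, ht3⟩ := test_vector (e0 i₀) x (C x) z (C z) hx0 hz0
      (hCnorm x) (hCnorm z) (fun a => hconx a) (fun a => hconz a) h0x
    have htne : t ≠ 0 := ne_zero_of_inner_ne_zero ht0
    rcases two_cand t htne ht0 with hft | hft
    · -- compare t with z
      have h := key_inner f hp htne hz0 (hVne t htne) (hVCne z hz0) hft hfz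
        (V.norm_map t) (by rw [V.norm_map, hCnorm])
      rw [LinearIsometryEquiv.inner_map_map] at h
      exact ht3 h.symm
    · -- compare t with x
      have h := key_inner f hp htne hx0 (hVCne t htne) (hVne x hx0) hft hfx
        (by rw [V.norm_map, hCnorm]) (V.norm_map x)
      rw [LinearIsometryEquiv.inner_map_map] at h
      have hct : (⟪C t, x⟫ : ℂ) = (starRingEnd ℂ) ⟪t, C x⟫ := by
        conv_lhs => rw [← hCC x]
        rw [hCinner]
      rw [hct, RCLike.norm_conj] at h
      exact ht2 h.symm
  -- global dichotomy
  have hglobal :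
      (∀ (x : H) (hx0 : x ≠ 0), (⟪e0 i₀, x⟫ : ℂ) ≠ 0 →
        f (Projectivization.mk ℂ x hx0) = Projectivization.mk ℂ (V x) (hVne x hx0)) ∨
      (∀ (x : H) (hx0 : x ≠ 0), (⟪e0 i₀, x⟫ : ℂ) ≠ 0 →
        f (Projectivization.mk ℂ x hx0) = Projectivization.mk ℂ (V (C x)) (hVCne x hx0)) := by
    by_cases hA : ∀ (x : H) (hx0 : x ≠ 0), (⟪e0 i₀, x⟫ : ℂ) ≠ 0 →
        f (Projectivization.mk ℂ x hx0) = Projectivization.mk ℂ (V x) (hVne x hx0)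
    · exact Or.inl hA
    right
    push_neg at hA
    obtain ⟨x₀, hx₀, h0x₀, hnex₀⟩ := hA
    have hfx₀ : f (Projectivization.mk ℂ x₀ hx₀) =
        Projectivization.mk ℂ (V (C x₀)) (hVCne x₀ hx₀) :=
      (two_cand x₀ hx₀ h0x₀).resolve_left hnex₀
    have hchir₀ : ¬ ∃ a : ℂ, C x₀ = a • x₀ := by
      rintro ⟨a, ha⟩
      apply hnex₀
      have ha0 : a ≠ 0 := by
        intro h0
        rw [h0, zero_smul] at ha
        exact hCne x₀ hx₀ ha
      rw [hfx₀]
      refine (mk_eq_mk_iff ℂ _ _ (hVCne x₀ hx₀) (hVne x₀ hx₀)).2 ⟨Units.mk0 a ha0, ?_⟩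
      rw [Units.smul_def, Units.val_mk0, ← map_smul, ← ha]
    intro z hz0 h0z
    rcases two_cand z hz0 h0z with hz | hz
    · -- z is strictly unitary: use rigidity against x₀
      rcases pair_rig z x₀ hz0 hx₀ h0z h0x₀ hz hfx₀ with ⟨a, ha⟩ | h
      · have ha0 : a ≠ 0 := by
          intro h0
          rw [h0, zero_smul] at ha
          exact hCne z hz0 ha
        rw [hz]
        refine (mk_eq_mk_iff ℂ _ _ (hVne z hz0) (hVCne z hz0)).2 ⟨Units.mk0 a⁻¹ (inv_ne_zero ha0), ?_⟩
        rw [Units.smul_def, Units.val_mk0, ha, map_smul, smul_smul,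
          inv_mul_cancel₀ ha0, one_smul]
      · exact absurd h hchir₀
    · exact hz
  -- package the unitary / antiunitary map
  obtain ⟨U, hUor, hUadd, hUnorm, hUe, hUmap⟩ :
      ∃ U : H → H, (IsUnitaryMap U ∨ IsAntiunitaryMap U) ∧
        (∀ a c : H, U (a + c) = U a + U c) ∧ (∀ a : H, ‖U a‖ = ‖a‖) ∧
        U (e0 i₀) = b i₀ ∧
        ∀ (x : H) (hx0 : x ≠ 0), (⟪e0 i₀, x⟫ : ℂ) ≠ 0 → ∀ (hUx : U x ≠ 0),
          f (Projectivization.mk ℂ x hx0) = Projectivization.mk ℂ (U x) hUx := by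
    rcases hglobal with hg | hg
    · refine ⟨fun x => V x, Or.inl ⟨V.bijective, fun a c => map_add V a c,
        fun c a => map_smul V c a, fun a c => V.inner_map_map a c⟩,
        fun a c => map_add V a c, fun a => V.norm_map a, hVbasis i₀, ?_⟩
      intro x hx0 h0 hUx
      exact hg x hx0 h0
    · refine ⟨fun x => V (C x), Or.inr ⟨(V.bijective).comp hCbij, ?_, ?_, ?_⟩, ?_, ?_, ?_, ?_⟩
      · intro a c
        dsimp only
        rw [hCadd, map_add]
      · intro c a
        dsimp only
        rw [hCsmul, map_smul]
      · intro a c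
        dsimp only
        rw [LinearIsometryEquiv.inner_map_map, hCinner]
      · intro a c
        dsimp only
        rw [hCadd, map_add]
      · intro a
        dsimp only
        rw [V.norm_map, hCnorm]
      · dsimp only
        rw [hCbasis i₀, hVbasis i₀]
      · intro x hx0 h0 hUx
        exact hg x hx0 h0
  have hUne : ∀ x : H, x ≠ 0 → U x ≠ 0 := by
    intro x hx h0
    apply hx
    rw [← norm_eq_zero, ← hUnorm, h0, norm_zero]
  -- extension to vectors with vanishing i₀-coordinate
  have hfull : ∀ (x : H) (hx0 : x ≠ 0),
      f (Projectivization.mk ℂ x hx0) = Projectivization.mk ℂ (U x) (hUne x hx0) := by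
    intro x hx0
    by_cases h0 : (⟪e0 i₀, x⟫ : ℂ) ≠ 0
    · exact hUmap x hx0 h0 (hUne x hx0)
    push_neg at h0
    set v : H := x + e0 i₀ with hvdef
    have hv1 : (⟪e0 i₀, v⟫ : ℂ) = 1 := by
      rw [hvdef, inner_add_right, h0, zero_add, hb_inner, if_pos rfl]
    have hv0 : v ≠ 0 := ne_zero_of_inner_ne_zero (a := e0 i₀) (by rw [hv1]; exact one_ne_zero)
    obtain ⟨y, hy, hynorm, hymk⟩ :=
      exists_norm_rep (f (Projectivization.mk ℂ x hx0)) ‖x‖ (norm_pos_iff.2 hx0)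
    -- the i₀-coordinate of y vanishes
    have hby : (⟪b i₀, y⟫ : ℂ) = 0 := by
      have h := key_inner f hp (hb_ne_zero e0 i₀) hx0 (hb_ne_zero b i₀) hy
        (hfb i₀) hymk.symm (by rw [hb_norm_one, hb_norm_one]) hynorm
      rw [h0, norm_zero, norm_eq_zero] at h
      exact h
    -- compare with v
    have h2 := key_inner f hp hv0 hx0 (hUne v hv0) hy
      (hUmap v hv0 (by rw [hv1]; exact one_ne_zero) (hUne v hv0)) hymk.symm
      (hUnorm v) hynorm
    have hUv : U v = U x + b i₀ := by
      rw [hvdef, hUadd, hUe]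
    rw [hUv, inner_add_left, hby, add_zero] at h2
    rw [hvdef, inner_add_left, h0, add_zero, inner_self_norm] at h2
    have heq : ‖(⟪U x, y⟫ : ℂ)‖ = ‖U x‖ * ‖y‖ := by rw [hUnorm, hynorm, h2]
    obtain ⟨r, hr0, hr⟩ := (norm_inner_eq_norm_iff (hUne x hx0) hy).1 heq
    rw [← hymk]
    refine (mk_eq_mk_iff ℂ _ _ hy (hUne x hx0)).2 ⟨Units.mk0 r hr0, ?_⟩
    rw [Units.smul_def, Units.val_mk0]
    exact hr.symm
  -- conclusion
  refine ⟨U, hUor, ?_⟩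
  intro L
  induction L using Projectivization.ind with
  | h x hx =>
    rw [hfull x hx, submodule_mk, submodule_mk]
    ext zz
    simp only [SetLike.mem_coe, Submodule.mem_span_singleton, Set.mem_image]
    constructor
    · rintro ⟨a, rfl⟩
      rcases hUor with hu | hu
      · exact ⟨a • x, ⟨a, rfl⟩, hu.2.2.1 a x⟩
      · refine ⟨(starRingEnd ℂ) a • x, ⟨_, rfl⟩, ?_⟩
        rw [hu.2.2.1, Complex.conj_conj]
    · rintro ⟨m, ⟨a, rfl⟩, rfl⟩
      rcases hUor with hu | hu
      · exact ⟨a, (hu.2.2.1 a x).symm⟩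
      · exact ⟨(starRingEnd ℂ) a, (hu.2.2.1 a x).symm⟩

end WignerAux

end

/-- **The von Neumann–Wigner theorem.** Every bijection of the projective space of a complex
Hilbert space which preserves transition probabilities is induced by a unitary or antiunitary
transformation of `H`. -/
theorem wigner_von_neumann
    {H : Type*} [NormedAddCommGroup H] [InnerProductSpace ℂ H] [CompleteSpace H]
    (f : ℙ ℂ H → ℙ ℂ H) (hf : Function.Bijective f)
    (hp : ∀ L₀ L₁ : ℙ ℂ H, transProb (f L₀) (f L₁) = transProb L₀ L₁) :
    ∃ U : H → H, (IsUnitaryMap U ∨ IsAntiunitaryMap U) ∧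
      ∀ L : ℙ ℂ H, ((f L).submodule : Set H) = U '' ((L.submodule : Submodule ℂ H) : Set H) := by
  exact WignerAux.main f hf hp
end

section
/- Let H be a complex Hilbert space and let U : H → H be a bijective ℝ-linear map satisfying |⟨Ux, Uy⟩| = |⟨x, y⟩| for all x, y ∈ H. Then U is either unitary (ℂ-linear with ⟨Ux,Uy⟩ = ⟨x,y⟩) or antiunitary (conjugate-linear with ⟨Ux,Uy⟩ = conj(⟨x,y⟩)). In other words, the group of real-linear bijections of H preserving the modulus of the inner product is exactly the group Q of unitary and antiunitary transformations of H. -/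
/-- Two additive real functionals with equal absolute values agree up to a global sign. -/
lemma sign1 {α : Type*} [AddCommMonoid α] (f g : α → ℝ)
    (hf : ∀ a b, f (a + b) = f a + f b) (hg : ∀ a b, g (a + b) = g a + g b)
    (habs : ∀ a, |f a| = |g a|) :
    (∀ a, f a = g a) ∨ (∀ a, f a = -g a) := by
  by_cases h : ∀ a, f a = g a
  · exact Or.inl h
  push_neg at h
  obtain ⟨a₁, ha₁⟩ := h
  have h1 : f a₁ = -g a₁ := by
    rcases abs_eq_abs.mp (habs a₁) with h' | h'
    · exact absurd h' ha₁
    · exact h'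
  have hg1 : g a₁ ≠ 0 := by
    intro h0
    apply ha₁
    rw [h0] at h1 ⊢
    simpa using h1
  right
  intro a
  rcases abs_eq_abs.mp (habs a) with h' | h'
  · have key := habs (a + a₁)
    rw [hf, hg] at key
    rcases abs_eq_abs.mp key with h2 | h2
    · exfalso; apply hg1; linarith
    · have : g a = 0 := by linarith
      rw [this] at h' ⊢; simpa using h'
  · exact h'

/-- One-sided biadditive version. -/
lemma sign2' {α : Type*} [AddCommMonoid α] (f g : α → α → ℝ)
    (hf1 : ∀ a b y, f (a + b) y = f a y + f b y)
    (hf2 : ∀ x, ∀ a b, f x (a + b) = f x a + f x b)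
    (hg1 : ∀ a b y, g (a + b) y = g a y + g b y)
    (hg2 : ∀ x, ∀ a b, g x (a + b) = g x a + g x b)
    (habs : ∀ x y, |f x y| = |g x y|)
    (x₀ y₀ : α) (hne : g x₀ y₀ ≠ 0)
    (hpos : ∀ y, f x₀ y = g x₀ y) :
    ∀ x y, f x y = g x y := by
  intro x y
  rcases sign1 (f x) (g x) (hf2 x) (hg2 x) (habs x) with hx | hx
  · exact hx y
  · have hxy0 : g x y₀ = 0 := by
      rcases sign1 (fun z => f z y₀) (fun z => g z y₀) (fun a b => hf1 a b y₀)
          (fun a b => hg1 a b y₀) (fun a => habs a y₀) with hv | hv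
      · linarith [hv x, hx y₀]
      · exact absurd (by linarith [hv x₀, hpos y₀] : g x₀ y₀ = 0) hne
    rcases sign1 (f (x₀ + x)) (g (x₀ + x)) (hf2 _) (hg2 _) (habs _) with hs | hs
    · have h1 := hs y
      rw [hf1, hg1] at h1
      have h2 := hpos y
      linarith
    · exfalso
      have h1 := hs y₀
      rw [hf1, hg1] at h1
      have h2 := hpos y₀
      have h3 := hx y₀
      apply hne
      linarith

/-- Two biadditive real forms with equal absolute values agree up to a global sign. -/
lemma sign2 {α : Type*} [AddCommMonoid α] (f g : α → α → ℝ)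
    (hf1 : ∀ a b y, f (a + b) y = f a y + f b y)
    (hf2 : ∀ x, ∀ a b, f x (a + b) = f x a + f x b)
    (hg1 : ∀ a b y, g (a + b) y = g a y + g b y)
    (hg2 : ∀ x, ∀ a b, g x (a + b) = g x a + g x b)
    (habs : ∀ x y, |f x y| = |g x y|)
    (x₀ y₀ : α) (hne : g x₀ y₀ ≠ 0) :
    (∀ x y, f x y = g x y) ∨ (∀ x y, f x y = -g x y) := by
  rcases sign1 (f x₀) (g x₀) (hf2 x₀) (hg2 x₀) (habs x₀) with h | h
  · exact Or.inl (sign2' f g hf1 hf2 hg1 hg2 habs x₀ y₀ hne h)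
  · right
    exact sign2' f (fun x y => -g x y) hf1 hf2
      (fun a b y => by show -g (a+b) y = -g a y + -g b y; rw [hg1]; ring)
      (fun x a b => by show -g x (a+b) = -g x a + -g x b; rw [hg2]; ring)
      (fun x y => by show |f x y| = |-g x y|; rw [habs, abs_neg]) x₀ y₀ (by simpa using hne) h

/-- A bijective ℝ-linear map of a complex Hilbert space preserves the modulus of the inner
product if and only if it is unitary or antiunitary: the group of real-linear bijections of
`H` preserving `|⟨·,·⟩|` is exactly the group `Q` of unitary and antiunitary transformations. -/
theorem real_linear_modulus_preserving_iff_unitary_or_antiunitary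
    {H : Type*} [NormedAddCommGroup H] [InnerProductSpace ℂ H] [CompleteSpace H]
    (U : H → H) :
    (Function.Bijective U ∧ (∀ x y : H, U (x + y) = U x + U y) ∧
        (∀ (r : ℝ) (x : H), U (r • x) = r • U x) ∧
        ∀ x y : H, ‖(inner ℂ (U x) (U y) : ℂ)‖ = ‖(inner ℂ x y : ℂ)‖) ↔
      (IsUnitaryMap U ∨ IsAntiunitaryMap U) := by
  constructor
  · rintro ⟨hbij, hadd, hsmulR, hnorm⟩
    have normsq : ∀ z : ℂ, ‖z‖ ^ 2 = z.re ^ 2 + z.im ^ 2 := by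
      intro z
      rw [Complex.sq_norm, Complex.normSq_apply]
      ring
    have ninner : ∀ x : H, ‖(inner ℂ x x : ℂ)‖ = ‖x‖ * ‖x‖ := fun x => by
      rw [← inner_self_re_eq_norm]; exact inner_self_eq_norm_mul_norm x
    have hnormU : ∀ x : H, ‖U x‖ = ‖x‖ := by
      intro x
      have h := hnorm x x
      rw [ninner, ninner] at h
      nlinarith [norm_nonneg (U x), norm_nonneg x]
    have hre : ∀ x y : H, (inner ℂ (U x) (U y) : ℂ).re = (inner ℂ x y : ℂ).re := by
      intro x y
      have h1 := norm_add_sq (𝕜 := ℂ) (U x) (U y)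
      have h2 := norm_add_sq (𝕜 := ℂ) x y
      rw [← hadd, hnormU, hnormU, hnormU] at h1
      simp only [RCLike.re_to_complex] at h1 h2
      linarith [h1.symm.trans h2]
    have him : ∀ x y : H, |(inner ℂ (U x) (U y) : ℂ).im| = |(inner ℂ x y : ℂ).im| := by
      intro x y
      have h1 := hnorm x y
      have h2 := hre x y
      have e1 := normsq (inner ℂ (U x) (U y) : ℂ)
      have e2 := normsq (inner ℂ x y : ℂ)
      refine abs_eq_abs.mpr (sq_eq_sq_iff_eq_or_eq_neg.mp ?_)
      rw [h1, h2] at e1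
      linarith
    rcases subsingleton_or_nontrivial H with hs | hn
    · left
      refine ⟨hbij, hadd, fun c x => Subsingleton.elim _ _, fun x y => ?_⟩
      rw [Subsingleton.elim (U x) x, Subsingleton.elim (U y) y]
    · obtain ⟨e, he⟩ := exists_ne (0 : H)
      have hge : (inner ℂ e (Complex.I • e) : ℂ).im ≠ 0 := by
        rw [inner_smul_right, inner_self_eq_norm_sq_to_K]
        simp [Complex.mul_im, pow_eq_zero_iff]
        norm_cast
        simp [pow_eq_zero_iff, he]
      have hadd1 : ∀ a b y : H, (inner ℂ (U (a + b)) (U y) : ℂ).im =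
          (inner ℂ (U a) (U y) : ℂ).im + (inner ℂ (U b) (U y) : ℂ).im := by
        intro a b y; rw [hadd, inner_add_left, Complex.add_im]
      have hadd2 : ∀ x a b : H, (inner ℂ (U x) (U (a + b)) : ℂ).im =
          (inner ℂ (U x) (U a) : ℂ).im + (inner ℂ (U x) (U b) : ℂ).im := by
        intro x a b; rw [hadd, inner_add_right, Complex.add_im]
      rcases sign2 (fun x y => (inner ℂ (U x) (U y) : ℂ).im) (fun x y => (inner ℂ x y : ℂ).im)
          hadd1 hadd2
          (fun a b y => by simp only [inner_add_left, Complex.add_im])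
          (fun x a b => by simp only [inner_add_right, Complex.add_im])
          him e (Complex.I • e) hge with hpm | hpm
      · -- unitary case
        have hinner : ∀ x y : H, (inner ℂ (U x) (U y) : ℂ) = inner ℂ x y := by
          intro x y
          exact Complex.ext (hre x y) (hpm x y)
        left
        refine ⟨hbij, hadd, fun c x => ?_, hinner⟩
        have key : (inner ℂ (U (c • x) - c • U x) (U (c • x) - c • U x) : ℂ) = 0 := by
          have h : ∀ z : H, (inner ℂ z (U (c • x) - c • U x) : ℂ) = 0 := by
            intro z
            obtain ⟨w, rfl⟩ := hbij.2 z
            rw [inner_sub_right, hinner, inner_smul_right, inner_smul_right, hinner, sub_self]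
          exact (inner_sub_left _ _ _).trans (by rw [h, h, sub_self])
        rw [inner_self_eq_zero] at key
        exact sub_eq_zero.mp key
      · -- antiunitary case
        have hinner : ∀ x y : H, (inner ℂ (U x) (U y) : ℂ) =
            (starRingEnd ℂ) (inner ℂ x y) := by
          intro x y
          refine Complex.ext ?_ ?_
          · rw [Complex.conj_re]; exact hre x y
          · rw [Complex.conj_im]; exact hpm x y
        right
        refine ⟨hbij, hadd, fun c x => ?_, hinner⟩
        have key : (inner ℂ (U (c • x) - (starRingEnd ℂ) c • U x)
            (U (c • x) - (starRingEnd ℂ) c • U x) : ℂ) = 0 := by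
          have h : ∀ z : H, (inner ℂ z (U (c • x) - (starRingEnd ℂ) c • U x) : ℂ) = 0 := by
            intro z
            obtain ⟨w, rfl⟩ := hbij.2 z
            rw [inner_sub_right, hinner, inner_smul_right, inner_smul_right, hinner,
              map_mul, sub_self]
          exact (inner_sub_left _ _ _).trans (by rw [h, h, sub_self])
        rw [inner_self_eq_zero] at key
        exact sub_eq_zero.mp key
  · rintro (⟨hbij, hadd, hsmul, hinner⟩ | ⟨hbij, hadd, hsmul, hinner⟩)
    · exact ⟨hbij, hadd,
        fun r x => by rw [← Complex.coe_smul, hsmul, Complex.coe_smul],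
        fun x y => by rw [hinner]⟩
    · refine ⟨hbij, hadd, fun r x => ?_, fun x y => by rw [hinner, RCLike.norm_conj]⟩
      rw [← Complex.coe_smul, hsmul, Complex.conj_ofReal, Complex.coe_smul]
end

section
/- Let H be a complex Hilbert space. The function d : ℙ(H) × ℙ(H) → [0, π] defined by d(L₀, L₁) = arccos(2·p(L₀,L₁) − 1) is a metric on the projective space ℙ(H): it is symmetric, d(L₀,L₁) = 0 if and only if L₀ = L₁, and it satisfies the triangle inequality d(L₀,L₂) ≤ d(L₀,L₁) + d(L₁,L₂). (This d is the Fubini–Study distance, related to the transition probability by cos(d) = 2p − 1.) -/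
open scoped LinearAlgebra.Projectivization

/-- The Fubini–Study distance `d(L₀,L₁) = arccos (2 p(L₀,L₁) - 1)`, so that `cos d = 2p - 1`. -/
noncomputable def fubiniStudyDist {H : Type*} [NormedAddCommGroup H] [InnerProductSpace ℂ H]
    (L₀ L₁ : ℙ ℂ H) : ℝ :=
  Real.arccos (2 * transProb L₀ L₁ - 1)

section FSAux

variable {H : Type*} [NormedAddCommGroup H] [InnerProductSpace ℂ H]

local notation "⟪" x ", " y "⟫" => @inner ℂ _ _ x y

private lemma fs_arccos_antitone : Antitone Real.arccos := fun x y h => by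
  unfold Real.arccos
  have := Real.monotone_arcsin h
  linarith

/-- Triangle inequality for `arccos ‖⟪·,·⟫‖` on unit vectors. -/
private lemma fs_key_unit {u v w : H} (hu : ‖u‖ = 1) (hv : ‖v‖ = 1) (hw : ‖w‖ = 1) :
    Real.arccos ‖⟪u, w⟫‖ ≤ Real.arccos ‖⟪u, v⟫‖ + Real.arccos ‖⟪v, w⟫‖ := by
  set a := ‖⟪u, v⟫‖ with ha
  set b := ‖⟪v, w⟫‖ with hb
  have ha0 : 0 ≤ a := norm_nonneg _
  have hb0 : 0 ≤ b := norm_nonneg _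
  have ha1 : a ≤ 1 := by simpa [hu, hv] using norm_inner_le_norm (𝕜 := ℂ) u v
  have hb1 : b ≤ 1 := by simpa [hv, hw] using norm_inner_le_norm (𝕜 := ℂ) v w
  set u' := u - ⟪v, u⟫ • v with hu'
  set w' := w - ⟪v, w⟫ • v with hw'
  have hvv : ⟪v, v⟫ = 1 := by
    rw [inner_self_eq_norm_sq_to_K, hv]; norm_num
  have hnu' : ‖u'‖ ^ 2 = 1 - a ^ 2 := by
    have horth : ⟪u', (⟪v, u⟫ : ℂ) • v⟫ = 0 := by
      simp [hu', inner_sub_left, inner_smul_left, inner_smul_right, inner_conj_symm, hvv, hv]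
    have h2 := norm_add_sq_eq_norm_sq_add_norm_sq_of_inner_eq_zero u' ((⟪v, u⟫ : ℂ) • v) horth
    rw [sub_add_cancel] at h2
    have hnv : ‖(⟪v, u⟫ : ℂ) • v‖ = a := by
      rw [norm_smul, hv, mul_one, ha, norm_inner_symm]
    rw [hu, hnv] at h2
    nlinarith
  have hnw' : ‖w'‖ ^ 2 = 1 - b ^ 2 := by
    have horth : ⟪w', (⟪v, w⟫ : ℂ) • v⟫ = 0 := by
      simp [hw', inner_sub_left, inner_smul_left, inner_smul_right, inner_conj_symm, hvv, hv]
    have h2 := norm_add_sq_eq_norm_sq_add_norm_sq_of_inner_eq_zero w' ((⟪v, w⟫ : ℂ) • v) horth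
    rw [sub_add_cancel] at h2
    have hnv : ‖(⟪v, w⟫ : ℂ) • v‖ = b := by
      rw [norm_smul, hv, mul_one, hb]
    rw [hw, hnv] at h2
    nlinarith
  have hnu'' : ‖u'‖ = Real.sqrt (1 - a ^ 2) := by
    rw [← hnu', Real.sqrt_sq (norm_nonneg _)]
  have hnw'' : ‖w'‖ = Real.sqrt (1 - b ^ 2) := by
    rw [← hnw', Real.sqrt_sq (norm_nonneg _)]
  have hdec : ⟪u', w'⟫ = ⟪u, w⟫ - ⟪u, v⟫ * ⟪v, w⟫ := by
    simp only [hu', hw', inner_sub_left, inner_sub_right, inner_smul_left, inner_smul_right,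
      inner_conj_symm, hvv, mul_one]
    ring
  have hkey : a * b - Real.sqrt (1 - a ^ 2) * Real.sqrt (1 - b ^ 2) ≤ ‖⟪u, w⟫‖ := by
    have h1 : a * b = ‖⟪u, w⟫ - ⟪u', w'⟫‖ := by
      rw [hdec]; simp [ha, hb]
    have h2 : ‖⟪u, w⟫ - ⟪u', w'⟫‖ ≤ ‖⟪u, w⟫‖ + ‖⟪u', w'⟫‖ := norm_sub_le _ _
    have h3 : ‖⟪u', w'⟫‖ ≤ Real.sqrt (1 - a ^ 2) * Real.sqrt (1 - b ^ 2) := by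
      rw [← hnu'', ← hnw'']; exact norm_inner_le_norm (𝕜 := ℂ) u' w'
    linarith
  have hcos : Real.cos (Real.arccos a + Real.arccos b) ≤ ‖⟪u, w⟫‖ := by
    rw [Real.cos_add, Real.cos_arccos (by linarith) ha1, Real.cos_arccos (by linarith) hb1,
      Real.sin_arccos, Real.sin_arccos]
    exact hkey
  rcases le_or_gt (Real.arccos a + Real.arccos b) Real.pi with h | h
  · calc Real.arccos ‖⟪u, w⟫‖ ≤ Real.arccos (Real.cos (Real.arccos a + Real.arccos b)) :=
          fs_arccos_antitone hcos
      _ = Real.arccos a + Real.arccos b := Real.arccos_cos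
          (by have := Real.arccos_nonneg a; have := Real.arccos_nonneg b; linarith) h
  · exact (Real.arccos_le_pi _).trans h.le

private lemma fs_inner_normalize (p q : H) (hp : p ≠ 0) (hq : q ≠ 0) :
    ‖⟪((‖p‖ : ℂ))⁻¹ • p, ((‖q‖ : ℂ))⁻¹ • q⟫‖ = ‖⟪p, q⟫‖ / (‖p‖ * ‖q‖) := by
  have hp' : ‖p‖ ≠ 0 := norm_ne_zero_iff.2 hp
  have hq' : ‖q‖ ≠ 0 := norm_ne_zero_iff.2 hq
  rw [inner_smul_left, inner_smul_right, norm_mul, norm_mul, RCLike.norm_conj]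
  rw [norm_inv, norm_inv, Complex.norm_real, Complex.norm_real, norm_norm, norm_norm]
  field_simp

private lemma fs_norm_normalize (p : H) (hp : p ≠ 0) : ‖((‖p‖ : ℂ))⁻¹ • p‖ = 1 := by
  have hp' : ‖p‖ ≠ 0 := norm_ne_zero_iff.2 hp
  rw [norm_smul, norm_inv, Complex.norm_real, norm_norm]
  field_simp

/-- Triangle inequality for normalized inner products of nonzero vectors. -/
private lemma fs_key {x y z : H} (hx : x ≠ 0) (hy : y ≠ 0) (hz : z ≠ 0) :
    Real.arccos (‖⟪x, z⟫‖ / (‖x‖ * ‖z‖)) ≤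
      Real.arccos (‖⟪x, y⟫‖ / (‖x‖ * ‖y‖)) + Real.arccos (‖⟪y, z⟫‖ / (‖y‖ * ‖z‖)) := by
  rw [← fs_inner_normalize x z hx hz, ← fs_inner_normalize x y hx hy,
    ← fs_inner_normalize y z hy hz]
  exact fs_key_unit (fs_norm_normalize x hx) (fs_norm_normalize y hy) (fs_norm_normalize z hz)

private lemma fs_c_nonneg (L₀ L₁ : ℙ ℂ H) :
    0 ≤ ‖⟪L₀.rep, L₁.rep⟫‖ / (‖L₀.rep‖ * ‖L₁.rep‖) := by positivity

private lemma fs_c_le_one (L₀ L₁ : ℙ ℂ H) :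
    ‖⟪L₀.rep, L₁.rep⟫‖ / (‖L₀.rep‖ * ‖L₁.rep‖) ≤ 1 := by
  have h0 : 0 < ‖L₀.rep‖ := norm_pos_iff.2 L₀.rep_nonzero
  have h1 : 0 < ‖L₁.rep‖ := norm_pos_iff.2 L₁.rep_nonzero
  rw [div_le_one (by positivity)]
  simpa using norm_inner_le_norm (𝕜 := ℂ) L₀.rep L₁.rep

private lemma fs_transProb_eq (L₀ L₁ : ℙ ℂ H) :
    transProb L₀ L₁ = (‖⟪L₀.rep, L₁.rep⟫‖ / (‖L₀.rep‖ * ‖L₁.rep‖)) ^ 2 := by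
  rw [transProb, div_pow, mul_pow]

private lemma fs_dist_eq (L₀ L₁ : ℙ ℂ H) :
    fubiniStudyDist L₀ L₁ =
      2 * Real.arccos (‖⟪L₀.rep, L₁.rep⟫‖ / (‖L₀.rep‖ * ‖L₁.rep‖)) := by
  set c := ‖⟪L₀.rep, L₁.rep⟫‖ / (‖L₀.rep‖ * ‖L₁.rep‖) with hc
  have hc0 : 0 ≤ c := fs_c_nonneg L₀ L₁
  have hc1 : c ≤ 1 := fs_c_le_one L₀ L₁
  rw [fubiniStudyDist, fs_transProb_eq]
  have h1 : 2 * c ^ 2 - 1 = Real.cos (2 * Real.arccos c) := by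
    rw [Real.cos_two_mul, Real.cos_arccos (by linarith) hc1]
  rw [← hc, h1, Real.arccos_cos (by have := Real.arccos_nonneg c; linarith)
    (by have := Real.arccos_le_pi_div_two.2 hc0; linarith [Real.pi_pos])]

end FSAux

/-- The Fubini–Study distance `d = arccos (2p - 1)` is a metric on the projective space of a
complex Hilbert space, with values in `[0, π]`: it is symmetric, vanishes exactly on the
diagonal, and satisfies the triangle inequality. -/
theorem fubiniStudyDist_is_metric
    {H : Type*} [NormedAddCommGroup H] [InnerProductSpace ℂ H] [CompleteSpace H] :
    (∀ L₀ L₁ : ℙ ℂ H, fubiniStudyDist L₀ L₁ ∈ Set.Icc (0 : ℝ) Real.pi) ∧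
      (∀ L₀ L₁ : ℙ ℂ H, fubiniStudyDist L₀ L₁ = fubiniStudyDist L₁ L₀) ∧
      (∀ L₀ L₁ : ℙ ℂ H, fubiniStudyDist L₀ L₁ = 0 ↔ L₀ = L₁) ∧
      (∀ L₀ L₁ L₂ : ℙ ℂ H,
        fubiniStudyDist L₀ L₂ ≤ fubiniStudyDist L₀ L₁ + fubiniStudyDist L₁ L₂) := by
  refine ⟨fun L₀ L₁ => ⟨Real.arccos_nonneg _, Real.arccos_le_pi _⟩, ?_, ?_, ?_⟩
  · intro L₀ L₁
    rw [fubiniStudyDist, fubiniStudyDist, transProb, transProb,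
      norm_inner_symm, mul_comm (‖L₀.rep‖ ^ 2)]
  · intro L₀ L₁
    have h0 : (0 : ℝ) < ‖L₀.rep‖ := norm_pos_iff.2 L₀.rep_nonzero
    have h1 : (0 : ℝ) < ‖L₁.rep‖ := norm_pos_iff.2 L₁.rep_nonzero
    set c := ‖(inner ℂ L₀.rep L₁.rep : ℂ)‖ / (‖L₀.rep‖ * ‖L₁.rep‖) with hc
    have hc1 : c ≤ 1 := fs_c_le_one L₀ L₁
    have hc0 : 0 ≤ c := fs_c_nonneg L₀ L₁
    rw [fubiniStudyDist, fs_transProb_eq, Real.arccos_eq_zero, ← hc]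
    constructor
    · intro h
      have hceq : c = 1 := by nlinarith
      have hinner : ‖(inner ℂ L₀.rep L₁.rep : ℂ)‖ = ‖L₀.rep‖ * ‖L₁.rep‖ := by
        have := hceq
        rw [hc, div_eq_one_iff_eq (by positivity)] at this
        exact this
      obtain ⟨r, hr, hrw⟩ :=
        (norm_inner_eq_norm_iff L₀.rep_nonzero L₁.rep_nonzero).1 hinner
      rw [← L₀.mk_rep, ← L₁.mk_rep]
      rw [Projectivization.mk_eq_mk_iff' ℂ _ _ L₀.rep_nonzero L₁.rep_nonzero]
      exact ⟨r⁻¹, by rw [hrw, smul_smul, inv_mul_cancel₀ hr, one_smul]⟩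
    · rintro rfl
      have : c = 1 := by
        rw [hc, inner_self_eq_norm_sq_to_K, div_eq_one_iff_eq (by positivity),
          norm_pow]
        simp [sq]
      rw [this]; norm_num
  · intro L₀ L₁ L₂
    rw [fs_dist_eq, fs_dist_eq, fs_dist_eq]
    have := fs_key L₀.rep_nonzero L₁.rep_nonzero L₂.rep_nonzero
    linarith
end

section
/- The group, under composition, of all bijections of ℙ(ℂ²) that preserve the transition probability p (i.e. bijections g with p(g(L₀), g(L₁)) = p(L₀,L₁) for all lines L₀, L₁) is isomorphic as a group to the orthogonal group O(3) of real orthogonal 3×3 matrices. -/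
open scoped LinearAlgebra.Projectivization

/-- The group (under composition) of all bijections of `ℙ(ℂ²)` preserving the transition
probability `p`. -/
def transProbPerms : Subgroup (Equiv.Perm (ℙ ℂ (EuclideanSpace ℂ (Fin 2)))) where
  carrier := {g | ∀ L₀ L₁, transProb (g L₀) (g L₁) = transProb L₀ L₁}
  one_mem' := by intro L₀ L₁; simp
  mul_mem' := by
    intro a b ha hb L₀ L₁
    have := ha (b L₀) (b L₁)
    simpa [Equiv.Perm.mul_apply, hb L₀ L₁] using this
  inv_mem' := by
    intro a ha L₀ L₁
    have h := ha (a⁻¹ L₀) (a⁻¹ L₁)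
    simpa [Equiv.Perm.inv_def, Equiv.apply_symm_apply] using h.symm

open scoped InnerProductSpace ComplexConjugate

noncomputable section WignerAux

abbrev H2 := EuclideanSpace ℂ (Fin 2)
abbrev E3 := EuclideanSpace ℝ (Fin 3)

def bNum (v : H2) : Fin 3 → ℝ
  | 0 => 2 * (conj (v 0) * v 1).re
  | 1 => 2 * (conj (v 0) * v 1).im
  | 2 => Complex.normSq (v 0) - Complex.normSq (v 1)
def bDen (v : H2) : ℝ := Complex.normSq (v 0) + Complex.normSq (v 1)
def blochRaw (v : H2) : E3 := WithLp.toLp 2 (fun i => bNum v i / bDen v)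

lemma bDen_pos {v : H2} (hv : v ≠ 0) : 0 < bDen v := by
  have h0 := Complex.normSq_nonneg (v 0)
  have h1 := Complex.normSq_nonneg (v 1)
  rcases eq_or_ne (v 0) 0 with h | h
  · have h1' : v 1 ≠ 0 := by
      intro h1'; apply hv; ext i; fin_cases i <;> simp [h, h1']
    have := Complex.normSq_pos.2 h1'; unfold bDen; linarith
  · have := Complex.normSq_pos.2 h; unfold bDen; linarith

lemma norm_sq_eq (v : H2) : ‖v‖^2 = bDen v := by
  rw [EuclideanSpace.norm_eq, Real.sq_sqrt (by positivity)]
  simp [bDen, Fin.sum_univ_two, Complex.sq_norm]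

lemma bNum_smul (c : ℂ) (v : H2) (i : Fin 3) :
    bNum (c • v) i = Complex.normSq c * bNum v i := by
  have h0 : (c • v) 0 = c * v 0 := rfl
  have h1 : (c • v) 1 = c * v 1 := rfl
  fin_cases i <;>
    simp only [bNum, h0, h1, map_mul, Complex.normSq_apply, Complex.mul_re,
      Complex.mul_im, Complex.conj_re, Complex.conj_im] <;> ring

lemma bDen_smul (c : ℂ) (v : H2) : bDen (c • v) = Complex.normSq c * bDen v := by
  have h0 : (c • v) 0 = c * v 0 := rfl
  have h1 : (c • v) 1 = c * v 1 := rfl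
  simp only [bDen, h0, h1, Complex.normSq_mul]; ring

lemma blochRaw_smul (c : ℂ) (hc : c ≠ 0) (v : H2) : blochRaw (c • v) = blochRaw v := by
  ext i
  have hc' : Complex.normSq c ≠ 0 := (Complex.normSq_pos.2 hc).ne'
  simp only [blochRaw, PiLp.toLp_apply, bNum_smul, bDen_smul, mul_div_mul_left _ _ hc']

lemma helper (N P S : ℝ) (hS : S ≠ 0) (h : 2 * N = S + P) : N / S = (1 + P / S) / 2 := by
  calc N / S = (S + P) / S / 2 := by rw [← h]; ring
    _ = (1 + P / S) / 2 := by rw [add_div, div_self hS]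

lemma inner_blochRaw (v w : H2) :
    (inner ℝ (blochRaw v) (blochRaw w) : ℝ)
      = (bNum v 0 * bNum w 0 + bNum v 1 * bNum w 1 + bNum v 2 * bNum w 2)
        / (bDen v * bDen w) := by
  simp only [PiLp.inner_apply, RCLike.inner_apply, conj_trivial, Fin.sum_univ_three, blochRaw,
    PiLp.toLp_apply, div_mul_div_comm, ← add_div]
  ring

lemma key (v w : H2) (hv : v ≠ 0) (hw : w ≠ 0) :
    ‖(inner ℂ v w : ℂ)‖^2 / (‖v‖^2 * ‖w‖^2)
      = (1 + (inner ℝ (blochRaw v) (blochRaw w) : ℝ)) / 2 := by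
  have hv' := bDen_pos hv
  have hw' := bDen_pos hw
  have hi : (inner ℂ v w : ℂ) = conj (v 0) * w 0 + conj (v 1) * w 1 := by
    simp [PiLp.inner_apply, Fin.sum_univ_two]
    ring
  have hn : ‖(inner ℂ v w : ℂ)‖^2 = Complex.normSq (conj (v 0) * w 0 + conj (v 1) * w 1) := by
    rw [hi, Complex.sq_norm]
  rw [hn, norm_sq_eq, norm_sq_eq, inner_blochRaw]
  apply helper _ _ _ (by positivity)
  simp only [bNum, bDen, Complex.normSq_apply, Complex.add_re, Complex.add_im,
    Complex.mul_re, Complex.mul_im, Complex.conj_re, Complex.conj_im]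
  ring

lemma blochRaw_norm (v : H2) (hv : v ≠ 0) : (inner ℝ (blochRaw v) (blochRaw v) : ℝ) = 1 := by
  have h := key v v hv hv
  have hn : ‖v‖ ≠ 0 := norm_ne_zero_iff.2 hv
  have h1 : ‖(inner ℂ v v : ℂ)‖^2 / (‖v‖^2 * ‖v‖^2) = 1 := by
    rw [show ‖(inner ℂ v v : ℂ)‖ = ‖v‖^2 by rw [inner_self_eq_norm_sq_to_K]; norm_num]
    field_simp
  rw [h1] at h
  linarith

lemma blochRaw_inj (v w : H2) (hv : v ≠ 0) (hw : w ≠ 0) (h : blochRaw v = blochRaw w) :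
    ∃ c : ℂ, c ≠ 0 ∧ w = c • v := by
  have hk := key v w hv hw
  rw [h, blochRaw_norm w hw] at hk
  have hv' : ‖v‖ ≠ 0 := norm_ne_zero_iff.2 hv
  have hw' : ‖w‖ ≠ 0 := norm_ne_zero_iff.2 hw
  have h2 : ‖(inner ℂ v w : ℂ)‖^2 = (‖v‖ * ‖w‖)^2 := by
    rw [div_eq_iff (by positivity)] at hk
    nlinarith [hk]
  have h3 : ‖(inner ℂ v w : ℂ)‖ = ‖v‖ * ‖w‖ := by
    have := congrArg Real.sqrt h2
    rwa [Real.sqrt_sq (norm_nonneg _), Real.sqrt_sq (by positivity)] at this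
  exact (norm_inner_eq_norm_iff hv hw).1 h3

lemma blochRaw_surj (u : E3) (hu : u 0^2 + u 1^2 + u 2^2 = 1) :
    ∃ (v : H2), v ≠ 0 ∧ blochRaw v = u := by
  rcases eq_or_ne (1 + u 2) 0 with h | h
  · have h2 : u 2 = -1 := by linarith
    have h01 : u 0 = 0 ∧ u 1 = 0 := by
      constructor <;> nlinarith [sq_nonneg (u 0), sq_nonneg (u 1)]
    refine ⟨!₂[0, 1], ?_, ?_⟩
    · intro hz
      have : !₂[(0:ℂ),1] 1 = 0 := by rw [hz]; rfl
      simp at this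
    · have e0 : blochRaw !₂[0,1] 0 = u 0 := by
        simp [blochRaw, bNum, bDen, h01.1]
      have e1 : blochRaw !₂[0,1] 1 = u 1 := by
        simp [blochRaw, bNum, bDen, h01.2]
      have e2 : blochRaw !₂[0,1] 2 = u 2 := by
        simp [blochRaw, bNum, bDen, h2]
      ext i
      fin_cases i
      · exact e0
      · exact e1
      · exact e2
  · have hz : u 2 ≥ -1 := by nlinarith [sq_nonneg (u 0), sq_nonneg (u 1), sq_nonneg (u 2 - 1)]
    have hpos : 0 < 1 + u 2 := lt_of_le_of_ne (by linarith) (Ne.symm h)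
    set a : ℂ := ((1 + u 2 : ℝ) : ℂ) with ha
    set b : ℂ := ⟨u 0, u 1⟩ with hb
    refine ⟨!₂[a, b], ?_, ?_⟩
    · intro hz'
      have : !₂[a,b] 0 = 0 := by rw [hz']; rfl
      simp only [PiLp.toLp_apply, Matrix.cons_val_zero, ha] at this
      rw [Complex.ofReal_eq_zero] at this
      linarith
    · have hva : !₂[a,b] 0 = a := rfl
      have hvb : !₂[a,b] 1 = b := rfl
      have hden : bDen !₂[a, b] = 2 * (1 + u 2) := by
        simp only [bDen, hva, hvb, Complex.normSq_apply, ha, hb, Complex.ofReal_re,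
          Complex.ofReal_im, Matrix.cons_val_zero, Matrix.cons_val_one, Matrix.head_cons]
        nlinarith [hu]
      have hd : bDen !₂[a,b] ≠ 0 := by rw [hden]; positivity
      have cnum : ∀ i : Fin 3, bNum !₂[a,b] i = u i * (2 * (1 + u 2)) := by
        intro i
        have tac : ∀ x : ℝ, bNum !₂[a,b] 0 = u 0 * (2 * (1 + u 2)) := fun _ => by
          simp only [bNum, hva, hvb, Complex.normSq_apply, Complex.mul_re, Complex.mul_im,
            Complex.conj_re, Complex.conj_im, ha, hb, Complex.ofReal_re, Complex.ofReal_im,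
            Matrix.cons_val_zero, Matrix.cons_val_one, Matrix.head_cons]
          nlinarith [hu]
        have t1 : bNum !₂[a,b] 1 = u 1 * (2 * (1 + u 2)) := by
          simp only [bNum, hva, hvb, Complex.normSq_apply, Complex.mul_re, Complex.mul_im,
            Complex.conj_re, Complex.conj_im, ha, hb, Complex.ofReal_re, Complex.ofReal_im,
            Matrix.cons_val_zero, Matrix.cons_val_one, Matrix.head_cons]
          nlinarith [hu]
        have t2 : bNum !₂[a,b] 2 = u 2 * (2 * (1 + u 2)) := by
          simp only [bNum, hva, hvb, Complex.normSq_apply, Complex.mul_re, Complex.mul_im,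
            Complex.conj_re, Complex.conj_im, ha, hb, Complex.ofReal_re, Complex.ofReal_im,
            Matrix.cons_val_zero, Matrix.cons_val_one, Matrix.head_cons]
          nlinarith [hu]
        fin_cases i
        · exact tac 0
        · exact t1
        · exact t2
      have comp : ∀ i : Fin 3, blochRaw !₂[a,b] i = u i := by
        intro i
        show bNum !₂[a,b] i / bDen !₂[a,b] = u i
        rw [div_eq_iff hd, hden]
        exact cnum i
      ext i
      fin_cases i
      · exact comp 0
      · exact comp 1
      · exact comp 2

open scoped LinearAlgebra.Projectivization

def blochMap (L : ℙ ℂ H2) : E3 := blochRaw L.rep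

lemma blochMap_mk (v : H2) (hv : v ≠ 0) :
    blochMap (Projectivization.mk ℂ v hv) = blochRaw v := by
  obtain ⟨c, hc⟩ := Projectivization.exists_smul_eq_mk_rep ℂ v hv
  rw [blochMap, ← hc, Units.smul_def, blochRaw_smul _ c.ne_zero]

lemma transProb_eq (L₀ L₁ : ℙ ℂ H2) :
    transProb L₀ L₁ = (1 + (inner ℝ (blochMap L₀) (blochMap L₁) : ℝ)) / 2 :=
  key _ _ L₀.rep_nonzero L₁.rep_nonzero

lemma blochMap_mem (L : ℙ ℂ H2) : blochMap L ∈ Metric.sphere (0:E3) 1 := by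
  rw [mem_sphere_zero_iff_norm]
  have h := blochRaw_norm L.rep L.rep_nonzero
  rw [real_inner_self_eq_norm_mul_norm] at h
  show ‖blochRaw L.rep‖ = 1
  nlinarith [norm_nonneg (blochRaw L.rep), h]

lemma norm_sq_E3 (u : E3) : ‖u‖^2 = u 0^2 + u 1^2 + u 2^2 := by
  rw [EuclideanSpace.norm_eq, Real.sq_sqrt (by positivity)]
  simp [Fin.sum_univ_three, Real.norm_eq_abs, sq_abs]

def blochEquiv : ℙ ℂ H2 ≃ Metric.sphere (0:E3) 1 :=
  Equiv.ofBijective (fun L => ⟨blochMap L, blochMap_mem L⟩)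
    ⟨by
      intro L₀ L₁ h
      have h' : blochRaw L₀.rep = blochRaw L₁.rep := congrArg Subtype.val h
      obtain ⟨c, hc, hcv⟩ := blochRaw_inj _ _ L₀.rep_nonzero L₁.rep_nonzero h'
      rw [← L₀.mk_rep, ← L₁.mk_rep]
      rw [Projectivization.mk_eq_mk_iff' ℂ _ _ L₀.rep_nonzero L₁.rep_nonzero]
      exact ⟨c⁻¹, by rw [hcv, smul_smul, inv_mul_cancel₀ hc, one_smul]⟩,
     by
      rintro ⟨u, hu⟩
      rw [mem_sphere_zero_iff_norm] at hu
      have hu2 : u 0^2 + u 1^2 + u 2^2 = 1 := by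
        rw [← norm_sq_E3, hu]; norm_num
      obtain ⟨v, hv, hbv⟩ := blochRaw_surj u hu2
      refine ⟨Projectivization.mk ℂ v hv, Subtype.ext ?_⟩
      show blochMap (Projectivization.mk ℂ v hv) = u
      rw [blochMap_mk]; exact hbv⟩

@[simp] lemma blochEquiv_coe (L : ℙ ℂ H2) : (blochEquiv L : E3) = blochMap L := rfl

abbrev S2 := Metric.sphere (0:E3) 1

lemma unit_mem (x : E3) (hx : x ≠ 0) : ‖x‖⁻¹ • x ∈ Metric.sphere (0:E3) 1 := by
  rw [mem_sphere_zero_iff_norm, norm_smul, norm_inv, norm_norm,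
    inv_mul_cancel₀ (norm_ne_zero_iff.2 hx)]

open Classical in
def extMap (φ : S2 → S2) : E3 → E3 := fun x =>
  if h : x = 0 then 0 else ‖x‖ • (φ ⟨‖x‖⁻¹ • x, unit_mem x h⟩ : E3)

lemma extMap_zero (φ : S2 → S2) : extMap φ 0 = 0 := by
  rw [extMap, dif_pos rfl]

lemma extMap_norm_smul (φ : S2 → S2) (x : E3) (hx : x ≠ 0) :
    extMap φ x = ‖x‖ • (φ ⟨‖x‖⁻¹ • x, unit_mem x hx⟩ : E3) := by
  rw [extMap, dif_neg hx]

lemma extMap_coe (φ : S2 → S2) (u : S2) : extMap φ (u : E3) = (φ u : E3) := by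
  have hu : ‖(u:E3)‖ = 1 := mem_sphere_zero_iff_norm.1 u.2
  have hne : (u:E3) ≠ 0 := by intro h; rw [h, norm_zero] at hu; norm_num at hu
  rw [extMap_norm_smul φ _ hne]
  have harg : (⟨‖(u:E3)‖⁻¹ • (u:E3), unit_mem _ hne⟩ : S2) = u := by
    apply Subtype.ext; show ‖(u:E3)‖⁻¹ • (u:E3) = (u:E3); rw [hu]; simp
  rw [harg, hu, one_smul]

lemma extMap_inner (φ : S2 → S2)
    (hφ : ∀ u v : S2, (inner ℝ (φ u : E3) (φ v : E3) : ℝ) = inner ℝ (u:E3) (v:E3))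
    (x y : E3) : (inner ℝ (extMap φ x) (extMap φ y) : ℝ) = inner ℝ x y := by
  rcases eq_or_ne x 0 with hx | hx
  · rw [hx, extMap_zero]; simp
  rcases eq_or_ne y 0 with hy | hy
  · rw [hy, extMap_zero]; simp
  rw [extMap_norm_smul φ x hx, extMap_norm_smul φ y hy, real_inner_smul_left,
    real_inner_smul_right, hφ]
  show ‖x‖ * (‖y‖ * (inner ℝ (‖x‖⁻¹ • x) (‖y‖⁻¹ • y) : ℝ)) = _
  rw [real_inner_smul_left, real_inner_smul_right]
  have hx' : ‖x‖ ≠ 0 := norm_ne_zero_iff.2 hx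
  have hy' : ‖y‖ ≠ 0 := norm_ne_zero_iff.2 hy
  field_simp

lemma extMap_comp (φ ψ : S2 → S2) : extMap (φ ∘ ψ) = extMap φ ∘ extMap ψ := by
  funext x
  rcases eq_or_ne x 0 with hx | hx
  · simp [hx, extMap_zero]
  have hψ : extMap ψ x = ‖x‖ • (ψ ⟨‖x‖⁻¹ • x, unit_mem x hx⟩ : E3) := extMap_norm_smul ψ x hx
  set u : S2 := ψ ⟨‖x‖⁻¹ • x, unit_mem x hx⟩ with hu
  have hun : ‖(u:E3)‖ = 1 := mem_sphere_zero_iff_norm.1 u.2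
  have hxn : ‖x‖ ≠ 0 := norm_ne_zero_iff.2 hx
  have hne : extMap ψ x ≠ 0 := by
    rw [hψ]; intro h
    rcases smul_eq_zero.1 h with h' | h'
    · exact hxn h'
    · rw [h', norm_zero] at hun; norm_num at hun
  show extMap (φ ∘ ψ) x = extMap φ (extMap ψ x)
  rw [extMap_norm_smul _ x hx, extMap_norm_smul φ _ hne]
  have hnorm : ‖extMap ψ x‖ = ‖x‖ := by
    rw [hψ, norm_smul, Real.norm_eq_abs, abs_of_nonneg (norm_nonneg x), hun, mul_one]
  have harg : (⟨‖extMap ψ x‖⁻¹ • extMap ψ x, unit_mem _ hne⟩ : S2) = u := by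
    apply Subtype.ext
    show ‖extMap ψ x‖⁻¹ • extMap ψ x = (u : E3)
    rw [hnorm, hψ, smul_smul, inv_mul_cancel₀ hxn, one_smul]
  rw [harg, hnorm]
  rfl

lemma extMap_id : extMap id = id := by
  funext x
  rcases eq_or_ne x 0 with hx | hx
  · simp [hx, extMap_zero]
  rw [extMap_norm_smul _ x hx]
  show ‖x‖ • (‖x‖⁻¹ • x) = x
  rw [smul_smul, mul_inv_cancel₀ (norm_ne_zero_iff.2 hx), one_smul]

lemma extMap_surj (φ : S2 → S2) (hs : Function.Surjective φ) :
    Function.Surjective (extMap φ) := by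
  intro y
  rcases eq_or_ne y 0 with hy | hy
  · exact ⟨0, by rw [extMap_zero, hy]⟩
  obtain ⟨u, hu⟩ := hs ⟨‖y‖⁻¹ • y, unit_mem y hy⟩
  have hyn : ‖y‖ ≠ 0 := norm_ne_zero_iff.2 hy
  have hun : ‖(u:E3)‖ = 1 := mem_sphere_zero_iff_norm.1 u.2
  have hune : (u:E3) ≠ 0 := by intro h; rw [h, norm_zero] at hun; norm_num at hun
  refine ⟨‖y‖ • (u:E3), ?_⟩
  have hne : ‖y‖ • (u:E3) ≠ 0 := smul_ne_zero hyn hune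
  rw [extMap_norm_smul _ _ hne]
  have hnorm : ‖‖y‖ • (u:E3)‖ = ‖y‖ := by
    rw [norm_smul, Real.norm_eq_abs, abs_of_nonneg (norm_nonneg y), hun, mul_one]
  have harg : (⟨‖‖y‖ • (u:E3)‖⁻¹ • (‖y‖ • (u:E3)), unit_mem _ hne⟩ : S2) = u := by
    apply Subtype.ext
    show ‖‖y‖ • (u:E3)‖⁻¹ • (‖y‖ • (u:E3)) = (u:E3)
    rw [hnorm, smul_smul, inv_mul_cancel₀ hyn, one_smul]
  rw [harg, hu, hnorm]
  show ‖y‖ • (‖y‖⁻¹ • y) = y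
  rw [smul_smul, mul_inv_cancel₀ hyn, one_smul]

lemma extMap_add (φ : S2 → S2) (hs : Function.Surjective φ)
    (hφ : ∀ u v : S2, (inner ℝ (φ u : E3) (φ v : E3) : ℝ) = inner ℝ (u:E3) (v:E3))
    (x y : E3) : extMap φ (x + y) = extMap φ x + extMap φ y := by
  have key : ∀ z : E3, (inner ℝ (extMap φ (x+y) - extMap φ x - extMap φ y) z : ℝ) = 0 := by
    intro z
    obtain ⟨w, hw⟩ := extMap_surj φ hs z
    rw [← hw, inner_sub_left, inner_sub_left, extMap_inner φ hφ, extMap_inner φ hφ,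
      extMap_inner φ hφ, inner_add_left]
    ring
  have h0 := key (extMap φ (x+y) - extMap φ x - extMap φ y)
  rw [inner_self_eq_zero] at h0
  have h1 : extMap φ (x+y) - (extMap φ x + extMap φ y) = 0 := by
    rw [sub_add_eq_sub_sub]; exact h0
  exact sub_eq_zero.1 h1

lemma extMap_smul (φ : S2 → S2) (hs : Function.Surjective φ)
    (hφ : ∀ u v : S2, (inner ℝ (φ u : E3) (φ v : E3) : ℝ) = inner ℝ (u:E3) (v:E3))
    (c : ℝ) (x : E3) : extMap φ (c • x) = c • extMap φ x := by
  have key : ∀ z : E3, (inner ℝ (extMap φ (c • x) - c • extMap φ x) z : ℝ) = 0 := by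
    intro z
    obtain ⟨w, hw⟩ := extMap_surj φ hs z
    rw [← hw, inner_sub_left, extMap_inner φ hφ, real_inner_smul_left,
      real_inner_smul_left, extMap_inner φ hφ]
    ring
  have h0 := key (extMap φ (c • x) - c • extMap φ x)
  rw [inner_self_eq_zero] at h0
  exact sub_eq_zero.1 h0

def bE : Module.Basis (Fin 3) ℝ E3 := (EuclideanSpace.basisFun (Fin 3) ℝ).toBasis

lemma toMatrix_apply' (f : E3 →ₗ[ℝ] E3) (i j : Fin 3) :
    LinearMap.toMatrix bE bE f i j = f (EuclideanSpace.single j 1) i := by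
  rw [LinearMap.toMatrix_apply]
  rw [show bE j = EuclideanSpace.single j 1 by
    rw [bE, OrthonormalBasis.coe_toBasis, EuclideanSpace.basisFun_apply]]
  rfl

lemma inner_eq_sum (x y : E3) : (inner ℝ x y : ℝ) = ∑ k, x k * y k := by
  simp [PiLp.inner_apply, RCLike.inner_apply, mul_comm]

lemma mem_orth (f : E3 →ₗ[ℝ] E3) (hf : ∀ x y, (inner ℝ (f x) (f y) : ℝ) = inner ℝ x y) :
    LinearMap.toMatrix bE bE f ∈ Matrix.orthogonalGroup (Fin 3) ℝ := by
  rw [Matrix.mem_orthogonalGroup_iff']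
  ext i j
  rw [Matrix.mul_apply, Matrix.one_apply]
  have : ∀ k, (Matrix.transpose (LinearMap.toMatrix bE bE f) i k) * (LinearMap.toMatrix bE bE f) k j
      = f (EuclideanSpace.single i 1) k * f (EuclideanSpace.single j 1) k := by
    intro k
    rw [Matrix.transpose_apply, toMatrix_apply', toMatrix_apply']
  rw [Finset.sum_congr rfl fun k _ => this k, ← inner_eq_sum, hf,
    EuclideanSpace.inner_single_left]
  simp [EuclideanSpace.single_apply, eq_comm]

def sphMap (g : Equiv.Perm (ℙ ℂ H2)) : S2 → S2 :=
  fun u => blochEquiv (g (blochEquiv.symm u))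

lemma sphMap_surj (g : Equiv.Perm (ℙ ℂ H2)) : Function.Surjective (sphMap g) :=
  (blochEquiv.symm.trans (g.trans blochEquiv)).surjective

lemma sphMap_inner {g : Equiv.Perm (ℙ ℂ H2)} (hg : g ∈ transProbPerms) (u v : S2) :
    (inner ℝ (sphMap g u : E3) (sphMap g v : E3) : ℝ) = inner ℝ (u : E3) (v : E3) := by
  have h := hg (blochEquiv.symm u) (blochEquiv.symm v)
  rw [transProb_eq, transProb_eq] at h
  have hu : blochMap (blochEquiv.symm u) = (u : E3) :=
    congrArg Subtype.val (blochEquiv.apply_symm_apply u)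
  have hv : blochMap (blochEquiv.symm v) = (v : E3) :=
    congrArg Subtype.val (blochEquiv.apply_symm_apply v)
  rw [hu, hv] at h
  have hgu : blochMap (g (blochEquiv.symm u)) = (sphMap g u : E3) := rfl
  have hgv : blochMap (g (blochEquiv.symm v)) = (sphMap g v : E3) := rfl
  rw [hgu, hgv] at h
  linarith

lemma sphMap_mul (g h : Equiv.Perm (ℙ ℂ H2)) :
    sphMap (g * h) = sphMap g ∘ sphMap h := by
  funext u
  show blochEquiv ((g * h) (blochEquiv.symm u)) = _
  rw [Equiv.Perm.mul_apply]
  show _ = blochEquiv (g (blochEquiv.symm (blochEquiv (h (blochEquiv.symm u)))))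
  rw [Equiv.symm_apply_apply]

lemma sphMap_one : sphMap 1 = id := by
  funext u
  show blochEquiv ((1 : Equiv.Perm (ℙ ℂ H2)) (blochEquiv.symm u)) = u
  rw [Equiv.Perm.one_apply, Equiv.apply_symm_apply]

def linOf (g : transProbPerms) : E3 →ₗ[ℝ] E3 where
  toFun := extMap (sphMap g.1)
  map_add' := extMap_add _ (sphMap_surj g.1) (sphMap_inner g.2)
  map_smul' := extMap_smul _ (sphMap_surj g.1) (sphMap_inner g.2)

lemma linOf_inner (g : transProbPerms) (x y : E3) :
    (inner ℝ (linOf g x) (linOf g y) : ℝ) = inner ℝ x y :=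
  extMap_inner _ (sphMap_inner g.2) x y

def Phi : transProbPerms →* Matrix.orthogonalGroup (Fin 3) ℝ where
  toFun g := ⟨LinearMap.toMatrix bE bE (linOf g), mem_orth _ (linOf_inner g)⟩
  map_one' := by
    apply Subtype.ext
    show LinearMap.toMatrix bE bE (linOf 1) = 1
    have h1 : linOf 1 = LinearMap.id := by
      apply LinearMap.ext; intro x
      show extMap (sphMap (1 : transProbPerms).1) x = x
      have : (1 : transProbPerms).1 = 1 := rfl
      rw [this, sphMap_one, extMap_id]; rfl
    rw [h1, LinearMap.toMatrix_id]
  map_mul' := by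
    intro g h
    apply Subtype.ext
    show LinearMap.toMatrix bE bE (linOf (g * h))
        = LinearMap.toMatrix bE bE (linOf g) * LinearMap.toMatrix bE bE (linOf h)
    have hgh : linOf (g * h) = (linOf g).comp (linOf h) := by
      apply LinearMap.ext; intro x
      show extMap (sphMap ((g * h : transProbPerms) : Equiv.Perm (ℙ ℂ H2))) x
          = (extMap (sphMap g.1) ∘ extMap (sphMap h.1)) x
      have : ((g * h : transProbPerms) : Equiv.Perm (ℙ ℂ H2)) = g.1 * h.1 := rfl
      rw [this, sphMap_mul, extMap_comp]
    rw [hgh, LinearMap.toMatrix_comp bE bE bE]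

lemma Phi_inj : Function.Injective Phi := by
  intro g h hgh
  have h1 : LinearMap.toMatrix bE bE (linOf g) = LinearMap.toMatrix bE bE (linOf h) :=
    congrArg Subtype.val hgh
  have h2 : linOf g = linOf h := (LinearMap.toMatrix bE bE).injective h1
  have h3 : ∀ u : S2, sphMap g.1 u = sphMap h.1 u := by
    intro u
    apply Subtype.ext
    have := congrArg (fun f : E3 →ₗ[ℝ] E3 => f (u : E3)) h2
    simpa only [linOf, LinearMap.coe_mk, AddHom.coe_mk, extMap_coe] using this
  apply Subtype.ext
  apply Equiv.ext
  intro L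
  have := h3 (blochEquiv L)
  simp only [sphMap, Equiv.symm_apply_apply] at this
  exact blochEquiv.injective this

lemma toLin_inner {A : Matrix (Fin 3) (Fin 3) ℝ} (hA : A ∈ Matrix.orthogonalGroup (Fin 3) ℝ)
    (x y : E3) : (inner ℝ (Matrix.toLin bE bE A x) (Matrix.toLin bE bE A y) : ℝ) = inner ℝ x y := by
  have hadj : LinearMap.adjoint (Matrix.toLin bE bE A) = Matrix.toLin bE bE (star A) := by
    apply (LinearMap.toMatrix bE bE).injective
    rw [LinearMap.toMatrix_toLin]
    rw [show bE = (EuclideanSpace.basisFun (Fin 3) ℝ).toBasis from rfl]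
    rw [LinearMap.toMatrix_adjoint]
    rw [show ((EuclideanSpace.basisFun (Fin 3) ℝ).toBasis : Module.Basis (Fin 3) ℝ E3) = bE from rfl]
    rw [LinearMap.toMatrix_toLin, Matrix.star_eq_conjTranspose]
  have hcomp : Matrix.toLin bE bE (star A) (Matrix.toLin bE bE A y) = y := by
    rw [← LinearMap.comp_apply, ← Matrix.toLin_mul,
      Matrix.mem_unitaryGroup_iff'.1 hA, Matrix.toLin_one, LinearMap.id_apply]
  calc (inner ℝ (Matrix.toLin bE bE A x) (Matrix.toLin bE bE A y) : ℝ)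
      = inner ℝ x (LinearMap.adjoint (Matrix.toLin bE bE A) (Matrix.toLin bE bE A y)) :=
        (LinearMap.adjoint_inner_right _ _ _).symm
    _ = inner ℝ x y := by rw [hadj, hcomp]

lemma Phi_surj : Function.Surjective Phi := by
  rintro ⟨A, hA⟩
  have hA' : star A ∈ Matrix.orthogonalGroup (Fin 3) ℝ := Unitary.star_mem hA
  set T := Matrix.toLin bE bE A with hT
  set T' := Matrix.toLin bE bE (star A) with hT'
  have hT'T : ∀ x, T' (T x) = x := by
    intro x
    rw [hT, hT', ← LinearMap.comp_apply, ← Matrix.toLin_mul,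
      Matrix.mem_unitaryGroup_iff'.1 hA, Matrix.toLin_one, LinearMap.id_apply]
  have hTT' : ∀ x, T (T' x) = x := by
    intro x
    rw [hT, hT', ← LinearMap.comp_apply, ← Matrix.toLin_mul,
      Matrix.mem_unitaryGroup_iff.1 hA, Matrix.toLin_one, LinearMap.id_apply]
  have hmemT : ∀ u : S2, T (u : E3) ∈ Metric.sphere (0:E3) 1 := by
    intro u
    rw [mem_sphere_zero_iff_norm]
    have h1 : (inner ℝ (T (u:E3)) (T (u:E3)) : ℝ) = inner ℝ (u:E3) (u:E3) := toLin_inner hA _ _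
    rw [real_inner_self_eq_norm_mul_norm, real_inner_self_eq_norm_mul_norm,
      mem_sphere_zero_iff_norm.1 u.2] at h1
    nlinarith [norm_nonneg (T (u:E3))]
  have hmemT' : ∀ u : S2, T' (u : E3) ∈ Metric.sphere (0:E3) 1 := by
    intro u
    rw [mem_sphere_zero_iff_norm]
    have h1 : (inner ℝ (T' (u:E3)) (T' (u:E3)) : ℝ) = inner ℝ (u:E3) (u:E3) := toLin_inner hA' _ _
    rw [real_inner_self_eq_norm_mul_norm, real_inner_self_eq_norm_mul_norm,
      mem_sphere_zero_iff_norm.1 u.2] at h1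
    nlinarith [norm_nonneg (T' (u:E3))]
  set sphA : S2 ≃ S2 :=
    { toFun := fun u => ⟨T (u:E3), hmemT u⟩
      invFun := fun u => ⟨T' (u:E3), hmemT' u⟩
      left_inv := fun u => Subtype.ext (hT'T (u:E3))
      right_inv := fun u => Subtype.ext (hTT' (u:E3)) } with hsphA
  set gA : Equiv.Perm (ℙ ℂ H2) := (blochEquiv.trans sphA).trans blochEquiv.symm with hgA
  have hBgA : ∀ L, blochMap (gA L) = T (blochMap L) := by
    intro L
    show blochMap (blochEquiv.symm (sphA (blochEquiv L))) = _
    have : blochMap (blochEquiv.symm (sphA (blochEquiv L)))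
        = ((blochEquiv (blochEquiv.symm (sphA (blochEquiv L)))) : E3) := rfl
    rw [this, blochEquiv.apply_symm_apply]
    rfl
  have hmem : gA ∈ transProbPerms := by
    intro L₀ L₁
    rw [transProb_eq, transProb_eq, hBgA, hBgA, toLin_inner hA]
  refine ⟨⟨gA, hmem⟩, ?_⟩
  apply Subtype.ext
  show LinearMap.toMatrix bE bE (linOf ⟨gA, hmem⟩) = A
  have hlin : linOf ⟨gA, hmem⟩ = T := by
    apply LinearMap.ext; intro x
    show extMap (sphMap gA) x = T x
    have hsph : ∀ u : S2, sphMap gA u = sphA u := by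
      intro u
      show blochEquiv (gA (blochEquiv.symm u)) = sphA u
      rw [hgA]
      show blochEquiv (blochEquiv.symm (sphA (blochEquiv (blochEquiv.symm u)))) = sphA u
      rw [blochEquiv.apply_symm_apply, blochEquiv.apply_symm_apply]
    rcases eq_or_ne x 0 with hx | hx
    · rw [hx, extMap_zero, map_zero]
    rw [extMap_norm_smul _ x hx, hsph]
    show ‖x‖ • T (‖x‖⁻¹ • x) = T x
    rw [map_smul, smul_smul, mul_inv_cancel₀ (norm_ne_zero_iff.2 hx), one_smul]
  rw [hlin, LinearMap.toMatrix_toLin]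


end WignerAux

/-- The group of all transition-probability-preserving bijections of `ℙ(ℂ²)` is isomorphic
to the orthogonal group `O(3)`. -/
theorem transProbPerms_iso_O3 :
    Nonempty (transProbPerms ≃* Matrix.orthogonalGroup (Fin 3) ℝ) := by
  exact ⟨MulEquiv.ofBijective Phi ⟨Phi_inj, Phi_surj⟩⟩
end
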